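/- arXiv:2302.00479 — 15 statements merged into one kernel-verified Lean document; each statement's English description precedes it below -/
import Mathlib

section
/- Let B ≥ 2 be an integer base, ℓ, k ≥ 1, and let (a, b, c) be a digit-block triple for P_{ℓ;k}. Then (a, b, c) satisfies (a·B + b)·c = a·(b·B^k + c) (property P_{ℓ;k}) if and only if the extended triple (a·B + b, b, b·B^k + c) satisfies (( a·B + b)·B + b)·(b·B^k + c) = (a·B + b)·(b·B^{k+1} + (b·B^k + c)) (property P_{ℓ+1;k+1}). -/
/-- Extension lemma: a digit-block triple `(a, b, c)` for `P_{ℓ;k}` satisfies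
`(a·B + b)·c = a·(b·B^k + c)` iff its extension `(a·B + b, b, b·B^k + c)`
satisfies the corresponding equation for `P_{ℓ+1;k+1}`. -/
theorem stmt_0 (B ℓ k a b c : ℕ) (hB : 2 ≤ B) (hℓ : 1 ≤ ℓ) (hk : 1 ≤ k)
    (ha₁ : B ^ (ℓ - 1) ≤ a) (ha₂ : a < B ^ ℓ) (hb : b < B) (hc : c < B ^ k) :
    (a * B + b) * c = a * (b * B ^ k + c) ↔
      ((a * B + b) * B + b) * (b * B ^ k + c) =
        (a * B + b) * (b * B ^ (k + 1) + (b * B ^ k + c)) := by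
  have hB0 : 0 < B := by omega
  constructor
  · intro h
    have := congrArg (· * B) h
    ring_nf
    ring_nf at this
    linarith
  · intro h
    have key : ((a * B + b) * c) * B = (a * (b * B ^ k + c)) * B := by
      ring_nf
      ring_nf at h
      linarith
    exact Nat.eq_of_mul_eq_mul_right hB0 key
end

section
/- Let B ≥ 2 be an integer base, k ≥ 1, and let (a, b, c) be a digit-block triple with property P*_k. Then: (1) 2a < B^k (so the leading base-B digit of a is less than B/2); (2) c = b·(B^k − B)/(B − 1) + c_k where c_k = c mod B, and b > c_k > 1 (i.e., all digits of c except the last equal b, and the last digit c_k satisfies 1 < c_k < b); (3) gcd(c_k, B) > 1; (4) if a_k ≠ b, where a_k = a mod B is the last digit of a, then gcd(|a_k − b|, B) > 1. -/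
/-!
Clearing denominators, `P_k` reads `c D = a b B^k` with `D = a (B - 1) + b`. Write
`B^k = (B - 1) s + B`, so `s = (B^k - B)/(B - 1)` has digits `1…10` and `a₀ = b (s + 1)` is the
repdigit `b…b`. The equation can be rearranged as
`(c - b s) D = b (a B - b s)` and as `(c - a₀) D = b (a - a₀)`. Since `a B ≥ B^k > b s`, the first
gives `c > b s`; the second says that `c - a₀` and `a - a₀` have the same sign and forces `c ≤ a₀`,
so a nontrivial solution has `b s < c < a₀ = b s + b` and `a < a₀`: the digits of `c` are `b…b r`
with `0 < r < b`. Then `b c = a (b B - r (B - 1)) ≥ a (b + B - 1) ≥ 2 a b` gives `2 a ≤ c < B^k`.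
Modulo `B` the first identity reads `r (a - b) ≡ 0`, whence the gcd condition on `a mod B - b`.
If `c` were prime to `B`, then `B^k ∣ D - b B^k = (a - a₀)(B - 1)`, so `B^k ∣ a - a₀` and `a = a₀`;
hence `gcd (r, B) > 1`, which also excludes `r = 1`.
-/

open Finset

theorem Nat.pow_succ_sub_self_div {B : ℕ} (hB : 2 ≤ B) (n : ℕ) :
    (B ^ (n + 1) - B) / (B - 1) = B * ∑ i ∈ range n, B ^ i := by
  obtain ⟨d, rfl⟩ : ∃ d, B = d + 1 := ⟨B - 1, by omega⟩
  simp only [Nat.add_sub_cancel]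
  refine Nat.div_eq_of_eq_mul_left (by omega) ?_
  rw [pow_succ, ← geom_sum_mul_add d n, add_one_mul (_ * d), Nat.add_sub_cancel]
  ring

theorem Nat.pow_succ_sub_one_div {B : ℕ} (hB : 2 ≤ B) (n : ℕ) :
    (B ^ (n + 1) - 1) / (B - 1) = B * ∑ i ∈ range n, B ^ i + 1 := by
  obtain ⟨d, rfl⟩ : ∃ d, B = d + 1 := ⟨B - 1, by omega⟩
  simp only [Nat.add_sub_cancel]
  refine Nat.div_eq_of_eq_mul_left (by omega) ?_
  rw [pow_succ, ← geom_sum_mul_add d n, add_one_mul (_ * d), ← add_assoc, Nat.add_sub_cancel]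
  ring

theorem sub_one_mul_mul_geom_sum_add {R : Type*} [CommRing R] (x : R) (n : ℕ) :
    (x - 1) * (x * ∑ i ∈ range n, x ^ i) + x = x ^ (n + 1) := by
  linear_combination x * geom_sum_mul x n

theorem Nat.mod_eq_sub_of_dvd_of_lt {B m c : ℕ} (h : B ∣ m) (hm : m ≤ c) (hc : c < m + B) :
    c % B = c - m := by
  obtain ⟨t, rfl⟩ := h
  rw [← Nat.sub_add_cancel hm, Nat.add_mul_mod_self_left, Nat.add_sub_cancel,
    Nat.mod_eq_of_lt (by omega)]

theorem Nat.one_lt_gcd_mod_of_not_isCoprime {B c : ℕ} (hB : 0 < B) (h : ¬IsCoprime (c : ℤ) B) :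
    1 < Nat.gcd (c % B) B := by
  rw [← Nat.gcd_rec]
  by_contra! hg
  exact h <| Nat.isCoprime_iff_coprime.2 <|
    Nat.coprime_comm.1 (le_antisymm hg (Nat.gcd_pos_of_pos_left c hB))

theorem Int.one_lt_gcd_of_dvd_mul {B r x : ℤ} (hr : 0 < r) (hrB : r < B) (h : B ∣ r * x) :
    1 < Int.gcd x B := by
  by_contra! hg
  have hx : IsCoprime x B := Int.isCoprime_iff_gcd_eq_one.2 <|
    le_antisymm hg (Int.gcd_pos_of_ne_zero_right x (by omega))
  have := Int.le_of_dvd hr (hx.symm.dvd_of_dvd_mul_right (mul_comm r x ▸ h))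
  omega

namespace DigitBlock

theorem pos_of_eq {B N a b c : ℕ} (hB : 2 ≤ B) (ha : 0 < a)
    (hP : (a * B + b) * c = a * (b * N + c)) (hbc : ¬(b = 0 ∧ c = 0)) : 0 < b := by
  refine Nat.pos_of_ne_zero fun hb => hbc ⟨hb, ?_⟩
  subst hb
  have hBa : a < a * B := (Nat.lt_mul_iff_one_lt_right ha).2 hB
  simpa [hBa.ne'] using hP

theorem intCast_eq {B N a b c : ℕ} (hP : (a * B + b) * c = a * (b * N + c)) :
    (c : ℤ) * (a * (B - 1) + b) = a * b * N := by
  have : ((a * B + b) * c : ℤ) = a * (b * N + c) := by exact_mod_cast hP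
  linear_combination this

variable {B N s a b c : ℤ}

theorem sub_mul_eq_of_eq (hN : (B - 1) * s + B = N) (hP : c * (a * (B - 1) + b) = a * b * N) :
    (c - b * s) * (a * (B - 1) + b) = b * (a * B - b * s) := by
  linear_combination hP - a * b * hN

theorem sub_repdigit_mul_eq_of_eq (hN : (B - 1) * s + B = N)
    (hP : c * (a * (B - 1) + b) = a * b * N) :
    (c - b * (s + 1)) * (a * (B - 1) + b) = b * (a - b * (s + 1)) := by
  linear_combination hP - a * b * hN

theorem mul_lt_of_eq (hb : 0 < b) (hbB : b < B) (ha : 0 ≤ a) (haN : N ≤ a * B)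
    (hN : (B - 1) * s + B = N) (hP : c * (a * (B - 1) + b) = a * b * N) : b * s < c := by
  have hD : 0 < a * (B - 1) + b := by nlinarith
  have hgap : 0 < a * B - b * s := by nlinarith
  have : 0 < (c - b * s) * (a * (B - 1) + b) := sub_mul_eq_of_eq hN hP ▸ mul_pos hb hgap
  linarith [pos_of_mul_pos_left this hD.le]

theorem lt_repdigit_of_eq (hb : 0 < b) (hbB : b < B) (hs : 0 ≤ s) (ha : 0 ≤ a)
    (hN : (B - 1) * s + B = N) (hP : c * (a * (B - 1) + b) = a * b * N)
    (hne : ¬(a = b * (s + 1) ∧ c = b * (s + 1))) : c < b * (s + 1) ∧ a < b * (s + 1) := by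
  have hD : 0 < a * (B - 1) + b := by nlinarith
  have h := sub_repdigit_mul_eq_of_eq hN hP
  have hc : c ≤ b * (s + 1) := by
    by_contra! hc
    have hD_le : a * (B - 1) + b ≤ b * (a - b * (s + 1)) := by
      rw [← h]; nlinarith
    nlinarith [mul_le_mul_of_nonneg_left (show b ≤ B - 1 by omega) ha, mul_nonneg hb.le hs]
  have hc' : c ≠ b * (s + 1) := by
    rintro rfl
    refine hne ⟨?_, rfl⟩
    rw [sub_self, zero_mul, eq_comm, mul_eq_zero] at h
    exact sub_eq_zero.1 (h.resolve_left hb.ne')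
  have hc_lt := lt_of_le_of_ne hc hc'
  refine ⟨hc_lt, ?_⟩
  have : b * (a - b * (s + 1)) < 0 := h ▸ mul_neg_of_neg_of_pos (by linarith) hD
  linarith [neg_of_mul_neg_right this hb.le]

theorem two_mul_le_of_eq (ha : 0 ≤ a) (hb : 0 < b) (hbB : b < B) (hc : c - b * s < b)
    (hN : (B - 1) * s + B = N) (hP : c * (a * (B - 1) + b) = a * b * N) : 2 * a ≤ c := by
  have h : a * (b * B - (c - b * s) * (B - 1)) = b * c := by
    linear_combination -hP + a * b * hN
  have hX : 2 * b ≤ b * B - (c - b * s) * (B - 1) := by nlinarith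
  have : b * (2 * a) ≤ b * c := by nlinarith [mul_le_mul_of_nonneg_left hX ha]
  exact le_of_mul_le_mul_left this hb

theorem eq_repdigit_of_isCoprime {k : ℕ} (hcB : IsCoprime c B) (ha : 0 ≤ a) (haN : a < B ^ k)
    (hb : 0 ≤ b) (hbB : b < B) (hs : 0 ≤ s) (hN : (B - 1) * s + B = B ^ k)
    (hP : c * (a * (B - 1) + b) = a * b * B ^ k) : a = b * (s + 1) := by
  have hD : B ^ k ∣ a * (B - 1) + b :=
    hcB.pow_right.symm.dvd_of_dvd_mul_left ⟨a * b, by linear_combination hP⟩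
  have hBB : IsCoprime (B ^ k) (B - 1) := IsCoprime.pow_left ⟨1, -1, by ring⟩
  have hdvd : B ^ k ∣ a - b * (s + 1) := by
    refine hBB.dvd_of_dvd_mul_right ?_
    convert dvd_sub hD (dvd_mul_left (B ^ k) b) using 1
    linear_combination -b * hN
  have := Int.eq_zero_of_abs_lt_dvd hdvd (by rw [abs_lt]; constructor <;> nlinarith)
  linarith

theorem dvd_mul_emod_sub_of_eq (hBs : B ∣ s) (hN : (B - 1) * s + B = N)
    (hP : c * (a * (B - 1) + b) = a * b * N) : B ∣ (c - b * s) * (a % B - b) := by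
  have h : B ∣ (c - b * s) * (a - b) := by
    obtain ⟨t, rfl⟩ := hBs
    exact ⟨(c - b * (B * t)) * a - b * (a - b * t), by linear_combination -sub_mul_eq_of_eq hN hP⟩
  have := dvd_sub h (dvd_mul_of_dvd_right (Int.dvd_self_sub_emod (x := a)) (c - b * s))
  rwa [← mul_sub, sub_sub_sub_cancel_left] at this

theorem structure_of_eq {k : ℕ} (ha : 0 ≤ a) (haN : a < B ^ k)
    (haN' : B ^ k ≤ a * B) (hb : 0 < b) (hbB : b < B) (hs : 0 ≤ s) (hBs : B ∣ s)
    (hN : (B - 1) * s + B = B ^ k) (hP : c * (a * (B - 1) + b) = a * b * B ^ k)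
    (hne : ¬(a = b * (s + 1) ∧ c = b * (s + 1))) :
    b * s < c ∧ c < b * s + b ∧ 2 * a ≤ c ∧ ¬IsCoprime c B ∧ B ∣ (c - b * s) * (a % B - b) := by
  have hc_low := mul_lt_of_eq hb hbB ha haN' hN hP
  obtain ⟨hc_up, ha_lt⟩ := lt_repdigit_of_eq hb hbB hs ha hN hP hne
  refine ⟨hc_low, by linarith, two_mul_le_of_eq ha hb hbB (by linarith) hN hP, fun hcB => ?_,
    dvd_mul_emod_sub_of_eq hBs hN hP⟩
  have := eq_repdigit_of_isCoprime hcB ha haN hb.le hbB hs hN hP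
  linarith

end DigitBlock

/-- Structure theorem for nontrivial solutions of `P*_k`. -/
theorem stmt_1 (B k a b c : ℕ) (hB : 2 ≤ B) (hk : 1 ≤ k)
    (ha₁ : B ^ (k - 1) ≤ a) (ha₂ : a < B ^ k) (hb : b < B) (hc : c < B ^ k)
    (hP : (a * B + b) * c = a * (b * B ^ k + c))
    (hz : ¬(a = 0 ∧ b = 0) ∧ ¬(a = 0 ∧ c = 0) ∧ ¬(b = 0 ∧ c = 0))
    (hne : ¬(a = b * ((B ^ k - 1) / (B - 1)) ∧ c = b * ((B ^ k - 1) / (B - 1)))) :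
    2 * a < B ^ k ∧
    (c = b * ((B ^ k - B) / (B - 1)) + c % B ∧ c % B < b ∧ 1 < c % B) ∧
    1 < Nat.gcd (c % B) B ∧
    (a % B ≠ b → 1 < Int.gcd ((a % B : ℤ) - (b : ℤ)) (B : ℤ)) := by
  obtain ⟨n, rfl⟩ : ∃ n, k = n + 1 := ⟨k - 1, by omega⟩
  rw [Nat.add_sub_cancel] at ha₁
  rw [Nat.pow_succ_sub_one_div hB] at hne
  rw [Nat.pow_succ_sub_self_div hB]
  set s := B * ∑ i ∈ range n, B ^ i
  have hBs : B ∣ s := dvd_mul_right B _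
  have hN : ((B : ℤ) - 1) * s + B = B ^ (n + 1) := by
    push_cast [s]; exact sub_one_mul_mul_geom_sum_add _ n
  have haN : (B : ℤ) ^ (n + 1) ≤ a * B := by
    rw [pow_succ]; exact_mod_cast Nat.mul_le_mul_right B ha₁
  have hb0 : 0 < b := DigitBlock.pos_of_eq hB ((Nat.pow_pos (by omega)).trans_le ha₁) hP hz.2.2
  obtain ⟨hc_low, hc_up, h2a, hcop, hdvd⟩ :=
    DigitBlock.structure_of_eq (a := (a : ℤ)) (b := b) (c := c) (by positivity)
      (by exact_mod_cast ha₂) haN (by omega) (by omega) (by positivity) (by exact_mod_cast hBs) hN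
      (by exact_mod_cast DigitBlock.intCast_eq hP) (by exact_mod_cast hne)
  have hc_low' : b * s < c := by exact_mod_cast hc_low
  have hc_up' : c < b * s + b := by exact_mod_cast hc_up
  set r := c % B
  have hr : r = c - b * s := Nat.mod_eq_sub_of_dvd_of_lt (hBs.mul_left b) hc_low'.le (by omega)
  have hrz : (c : ℤ) - b * s = r := by rw [hr, Nat.cast_sub hc_low'.le, Nat.cast_mul b s]
  have hgcd : 1 < Nat.gcd r B := Nat.one_lt_gcd_mod_of_not_isCoprime (by omega) hcop
  refine ⟨by omega, ⟨by omega, by omega, ?_⟩, hgcd, fun _ => ?_⟩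
  · by_contra! h1
    rw [show r = 1 by omega, Nat.gcd_one_left] at hgcd
    exact lt_irrefl 1 hgcd
  · exact Int.one_lt_gcd_of_dvd_mul (r := r) (by omega) (by omega) (hrz ▸ hdvd)
end

section
/- Let B ≥ 2 be an integer base and k ≥ 1. There exists a digit-block triple (a, b, c) with property P*_k if and only if B is composite. -/
/-!
Write `B = q + 1`; the equation reads `c (a q + b) = a b B^k`.
If `B = e f` is composite, `M = B^(k-1) f` gives the solution `(M - 1, B - 1, e (M - 1))`.
If `B` is prime, divide out `g = gcd a b` and split `a q + b = B^m w` with `B ∤ w`: then `w` is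
prime to `B^k` and to `a / g`, so `w ∣ b < B`. As `B ≡ 1 (mod q)`, `w ≡ b / g (mod q)`, hence
`w = b / g`; then `b / g` divides `a / g`, so `b = g` and `a q + b = b B^m`. The bounds on `a`
force `m = k`, and the solution is the trivial one with all digits equal.
-/

open Finset

/-- Property `P*_k` of the digit-block triple `(a, b, c)` in base `B`. -/
def IsNontrivialSolution (B k a b c : ℕ) : Prop :=
  B ^ (k - 1) ≤ a ∧ a < B ^ k ∧ b < B ∧ c < B ^ k ∧
    (a * B + b) * c = a * (b * B ^ k + c) ∧
    (¬(a = 0 ∧ b = 0) ∧ ¬(a = 0 ∧ c = 0) ∧ ¬(b = 0 ∧ c = 0)) ∧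
    ¬(a = b * ((B ^ k - 1) / (B - 1)) ∧ c = b * ((B ^ k - 1) / (B - 1)))

theorem add_one_mul_add_mul_eq_iff (q a b c X : ℕ) :
    (a * (q + 1) + b) * c = a * (b * X + c) ↔ c * (a * q + b) = a * b * X := by
  rw [show (a * (q + 1) + b) * c = c * (a * q + b) + a * c by ring,
    show a * (b * X + c) = a * b * X + a * c by ring, Nat.add_right_cancel_iff]

theorem add_one_pow_modEq_one (q m : ℕ) : (q + 1) ^ m ≡ 1 [MOD q] := by
  rw [← geom_sum_mul_add]
  simp [Nat.ModEq]

theorem eq_of_modEq_of_le {q x y : ℕ} (hx : 0 < x) (hxq : x ≤ q) (hy : 0 < y) (hyq : y ≤ q)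
    (h : x ≡ y [MOD q]) : x = y :=
  h.eq_of_abs_lt (by rw [abs_lt]; omega)

theorem ordCompl_dvd_of_dvd_mul {p W α b k : ℕ} (hp : p.Prime) (hW : W ≠ 0)
    (hWα : W.Coprime α) (h : W ∣ α * b * p ^ k) : ordCompl[p] W ∣ b := by
  have hw : ordCompl[p] W ∣ W := Nat.ordCompl_dvd W p
  have hwp : (ordCompl[p] W).Coprime (p ^ k) := ((Nat.coprime_ordCompl hp hW).pow_left k).symm
  have hwα : (ordCompl[p] W).Coprime α := hWα.coprime_dvd_left hw
  rw [mul_assoc] at h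
  exact hwp.dvd_of_dvd_mul_right (hwα.dvd_of_dvd_mul_left (hw.trans h))

theorem eq_one_of_coprime_of_dvd {q α β b k : ℕ} (hp : (q + 1).Prime) (hαβ : α.Coprime β)
    (hb : 0 < b) (hbq : b ≤ q) (hβb : β ∣ b) (hdvd : α * q + β ∣ α * b * (q + 1) ^ k) :
    β = 1 ∧ ∃ m, α * q + 1 = (q + 1) ^ m := by
  have hq : 0 < q := by have := hp.two_le; omega
  have hβ : 0 < β := Nat.pos_of_dvd_of_pos hβb hb
  set W := α * q + β with hW
  have hWα : W.Coprime α := by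
    rw [hW, add_comm, Nat.coprime_add_mul_left_left]; exact hαβ.symm
  set m := W.factorization (q + 1)
  have hsplit : (q + 1) ^ m * ordCompl[q + 1] W = W := Nat.ordProj_mul_ordCompl_eq_self W (q + 1)
  have hwb : ordCompl[q + 1] W ∣ b := ordCompl_dvd_of_dvd_mul hp (by omega) hWα hdvd
  have hw : 0 < ordCompl[q + 1] W := Nat.pos_of_dvd_of_pos hwb hb
  have hwβ : ordCompl[q + 1] W = β := by
    refine eq_of_modEq_of_le hw ((Nat.le_of_dvd hb hwb).trans hbq) hβ
      ((Nat.le_of_dvd hb hβb).trans hbq) ?_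
    calc ordCompl[q + 1] W = 1 * ordCompl[q + 1] W := (one_mul _).symm
      _ ≡ (q + 1) ^ m * ordCompl[q + 1] W [MOD q] := (add_one_pow_modEq_one q m).symm.mul_right _
      _ = q * α + β := by rw [hsplit, hW, mul_comm]
      _ ≡ β [MOD q] := by simp [Nat.ModEq]
  rw [hwβ, hW, ← geom_sum_mul_add] at hsplit
  set t := ∑ i ∈ range m, (q + 1) ^ i
  have hα : α = t * β := by
    apply Nat.eq_of_mul_eq_mul_right hq; linarith
  have hβ1 : β = 1 := hαβ.symm.eq_one_of_dvd (Dvd.intro_left t hα.symm)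
  subst hβ1
  exact ⟨rfl, m, by rw [← geom_sum_mul_add, hα, mul_one]⟩

theorem exists_pow_of_dvd {q a b k : ℕ} (hp : (q + 1).Prime) (hb : 0 < b) (hbq : b ≤ q)
    (h : a * q + b ∣ a * b * (q + 1) ^ k) : ∃ m, a * q + b = b * (q + 1) ^ m := by
  obtain ⟨g, α, β, hg, hαβ, rfl, rfl⟩ := Nat.exists_coprime' (Nat.gcd_pos_of_pos_right a hb)
  have hdvd : α * q + β ∣ α * (β * g) * (q + 1) ^ k := by
    refine Nat.dvd_of_mul_dvd_mul_left hg ?_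
    convert h using 1 <;> ring
  obtain ⟨rfl, m, hm⟩ := eq_one_of_coprime_of_dvd hp hαβ hb hbq (Dvd.intro g rfl) hdvd
  exact ⟨m, by rw [← hm]; ring⟩

theorem eq_of_mul_add_eq_mul_pow {q a b k m : ℕ} (ha_lo : (q + 1) ^ (k - 1) ≤ a)
    (ha_hi : a < (q + 1) ^ k) (hb : 0 < b) (hbq : b ≤ q) (h : a * q + b = b * (q + 1) ^ m) :
    m = k := by
  have hm_lt : m < k + 1 := by
    refine (Nat.pow_lt_pow_iff_right (by omega : 1 < q + 1)).mp
      (Nat.lt_of_mul_lt_mul_left (a := b) ?_)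
    calc b * (q + 1) ^ m = a * q + b := h.symm
      _ ≤ (a + 1) * q := by rw [add_mul, one_mul]; omega
      _ ≤ (q + 1) ^ k * q := Nat.mul_le_mul_right q ha_hi
      _ < (q + 1) ^ (k + 1) := by
        rw [pow_succ]; exact Nat.mul_lt_mul_of_pos_left (lt_add_one q) (by positivity)
      _ ≤ b * (q + 1) ^ (k + 1) := Nat.le_mul_of_pos_left _ hb
  have hk_lt : k - 1 < m := by
    refine (Nat.pow_lt_pow_iff_right (by omega : 1 < q + 1)).mp
      (Nat.lt_of_mul_lt_mul_left (a := b) ?_)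
    calc b * (q + 1) ^ (k - 1) ≤ q * a := Nat.mul_le_mul hbq ha_lo
      _ < a * q + b := by rw [mul_comm]; omega
      _ = b * (q + 1) ^ m := h
  omega

theorem eq_geom_sum_of_prime {q k a b c : ℕ} (hp : (q + 1).Prime)
    (ha_lo : (q + 1) ^ (k - 1) ≤ a) (ha_hi : a < (q + 1) ^ k) (hb : 0 < b) (hbq : b ≤ q)
    (h : c * (a * q + b) = a * b * (q + 1) ^ k) :
    a = b * ∑ i ∈ range k, (q + 1) ^ i ∧ c = a := by
  have hq : 0 < q := by have := hp.two_le; omega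
  obtain ⟨m, hm⟩ := exists_pow_of_dvd hp hb hbq (Dvd.intro_left c h)
  obtain rfl := (eq_of_mul_add_eq_mul_pow ha_lo ha_hi hb hbq hm).symm
  constructor
  · rw [← geom_sum_mul_add] at hm
    apply Nat.eq_of_mul_eq_mul_right hq
    linarith
  · rw [hm] at h
    apply Nat.eq_of_mul_eq_mul_right (by positivity : 0 < b * (q + 1) ^ k)
    linarith

theorem IsNontrivialSolution.not_prime {B k a b c : ℕ} (h : IsNontrivialSolution B k a b c) :
    ¬ B.Prime := by
  intro hp
  obtain ⟨q, rfl⟩ : ∃ q, B = q + 1 := ⟨B - 1, by have := hp.two_le; omega⟩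
  obtain ⟨ha_lo, ha_hi, hbB, -, heq, ⟨-, -, hbc⟩, htriv⟩ := h
  rw [add_one_mul_add_mul_eq_iff] at heq
  have hb : 0 < b := by
    refine Nat.pos_of_ne_zero fun hb0 => hbc ⟨hb0, ?_⟩
    have ha : 0 < a := lt_of_lt_of_le (by positivity) ha_lo
    have hq : 0 < q := by have := hp.two_le; omega
    simpa [hb0, ha.ne', hq.ne'] using heq
  obtain ⟨hab, hca⟩ := eq_geom_sum_of_prime hp ha_lo ha_hi hb (by omega) heq
  rw [← Nat.geomSum_eq hp.two_le] at htriv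
  exact htriv ⟨hab, hca.trans hab⟩

theorem isNontrivialSolution_mul {e f k : ℕ} (he : 2 ≤ e) (hf : 2 ≤ f) (hk : 1 ≤ k) :
    IsNontrivialSolution (e * f) k ((e * f) ^ (k - 1) * f - 1) (e * f - 1)
      (e * ((e * f) ^ (k - 1) * f - 1)) := by
  obtain ⟨n, rfl⟩ : ∃ n, k = n + 1 := ⟨k - 1, by omega⟩
  unfold IsNontrivialSolution
  rw [Nat.add_sub_cancel]
  set B := e * f with hB
  set M := B ^ n * f with hM
  have hBk : B ^ (n + 1) = e * M := by rw [pow_succ, hM, hB]; ring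
  have hM_ge : 2 * B ^ n ≤ M := by rw [hM, mul_comm]; exact Nat.mul_le_mul_left _ hf
  have hB_pos : 0 < B ^ n := by positivity
  have hB2 : 2 ≤ B := by rw [hB]; nlinarith
  clear_value M B
  rw [hBk]
  refine ⟨by omega, ?_, by omega, ?_, ?_, ⟨by omega, by omega, ?_⟩, ?_⟩
  · exact (Nat.sub_lt (by omega) one_pos).trans_le (Nat.le_mul_of_pos_left M (by omega))
  · exact Nat.mul_lt_mul_of_pos_left (by omega) (by omega)
  · obtain ⟨A, hA⟩ : ∃ A, M = A + 1 := ⟨M - 1, by omega⟩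
    obtain ⟨t, ht⟩ : ∃ t, B = t + 1 := ⟨B - 1, by omega⟩
    rw [hA, ht, Nat.add_sub_cancel, Nat.add_sub_cancel]
    ring
  · rintro ⟨-, hc⟩
    exact (Nat.mul_pos (by omega) (by omega)).ne' hc
  · rintro ⟨ha, hc⟩
    have : 2 * (M - 1) ≤ e * (M - 1) := Nat.mul_le_mul_right _ he
    omega

/-- The `P*_k` problem admits solutions iff the base `B` is composite. -/
theorem stmt_2 (B k : ℕ) (hB : 2 ≤ B) (hk : 1 ≤ k) :
    (∃ a b c : ℕ,
      B ^ (k - 1) ≤ a ∧ a < B ^ k ∧ b < B ∧ c < B ^ k ∧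
      (a * B + b) * c = a * (b * B ^ k + c) ∧
      (¬(a = 0 ∧ b = 0) ∧ ¬(a = 0 ∧ c = 0) ∧ ¬(b = 0 ∧ c = 0)) ∧
      ¬(a = b * ((B ^ k - 1) / (B - 1)) ∧ c = b * ((B ^ k - 1) / (B - 1)))) ↔
    ¬ Nat.Prime B := by
  constructor
  · rintro ⟨a, b, c, h⟩
    exact IsNontrivialSolution.not_prime h
  · intro hp
    obtain ⟨e, ⟨f, rfl⟩, he, hef⟩ := Nat.exists_dvd_of_not_prime2 hB hp
    have hf : 2 ≤ f := (lt_mul_iff_one_lt_right (by omega)).mp hef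
    exact ⟨_, _, _, isNontrivialSolution_mul he hf hk⟩
end

section
/- Let B ≥ 2 be an integer base and k ≥ 1. The set of digit-block triples (a, b, c) with property P*_k has cardinality at most (B − 2)·(B − 3)/2. -/
open Finset

private lemma geom_zmod (D t B : ℕ) (hD : t * B + 1 = D) (k : ℕ) :
    ((t : ZMod D)) ^ k * (∑ i ∈ Finset.range k, (B : ZMod D) ^ i) * ((t : ZMod D) + 1)
      = (t : ZMod D) * ((t : ZMod D) ^ k - (-1) ^ k) := by
  have h : (t : ZMod D) * (B : ZMod D) = -1 := by
    have h0 : ((t * B + 1 : ℕ) : ZMod D) = 0 := by rw [hD]; exact ZMod.natCast_self D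
    push_cast at h0
    linear_combination h0
  induction k with
  | zero => simp
  | succ k ih =>
    rw [Finset.sum_range_succ]
    have hb : (t : ZMod D) ^ (k + 1) * (B : ZMod D) ^ k = (t : ZMod D) * (-1 : ZMod D) ^ k := by
      have h2 : ((t : ZMod D) * (B : ZMod D)) ^ k = (-1 : ZMod D) ^ k := by rw [h]
      calc (t : ZMod D) ^ (k + 1) * (B : ZMod D) ^ k
          = (t : ZMod D) * ((t : ZMod D) * (B : ZMod D)) ^ k := by ring
        _ = (t : ZMod D) * (-1 : ZMod D) ^ k := by rw [h2]
    linear_combination ((t : ZMod D) + 1) * hb + (t : ZMod D) * ih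

private lemma tri_step (m : ℕ) : (m - 2) * (m - 3) + 2 * (m - 2) = (m - 1) * (m - 2) := by
  rcases Nat.lt_or_ge m 3 with h | h
  · interval_cases m <;> rfl
  · obtain ⟨j, rfl⟩ := Nat.exists_eq_add_of_le h
    have e1 : 3 + j - 2 = j + 1 := by omega
    have e2 : 3 + j - 3 = j := by omega
    have e3 : 3 + j - 1 = j + 2 := by omega
    rw [e1, e2, e3]; ring

private lemma tri_sum (B : ℕ) : 2 * (∑ x ∈ Finset.range B, (x - 2)) = (B - 2) * (B - 3) := by
  induction B with
  | zero => simp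
  | succ m ih =>
    rw [Finset.sum_range_succ, Nat.mul_add, ih]
    have e : m + 1 - 2 = m - 1 := by omega
    have e' : m + 1 - 3 = m - 2 := by omega
    rw [e, e']
    exact tri_step m

/-- All the arithmetic facts about a nontrivial solution. -/
private lemma sol_facts (B k : ℕ) (hB : 2 ≤ B) (hk : 1 ≤ k)
    (a b c : ℕ) (h1 : B ^ (k - 1) ≤ a) (h2 : a < B ^ k) (h3 : b < B) (h4 : c < B ^ k)
    (h5 : (a * B + b) * c = a * (b * B ^ k + c))
    (h6c : ¬(b = 0 ∧ c = 0))
    (h7 : ¬(a = b * ((B ^ k - 1) / (B - 1)) ∧ c = b * ((B ^ k - 1) / (B - 1)))) :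
    c < b * ((B ^ k - 1) / (B - 1)) ∧
    b * ((B ^ k - 1) / (B - 1)) - c + 2 ≤ b ∧
    (a : ℤ) * ((b : ℤ) * (B : ℤ) ^ k - (c : ℤ) * ((B : ℤ) - 1)) = (b : ℤ) * (c : ℤ) ∧
    (0 : ℤ) < (b : ℤ) * (B : ℤ) ^ k - (c : ℤ) * ((B : ℤ) - 1) := by
  set R := (B ^ k - 1) / (B - 1) with hRdef
  have hBk1 : 1 ≤ B ^ k := Nat.one_le_pow _ _ (by omega)
  have hdvd : (B - 1) ∣ (B ^ k - 1) := by simpa using Nat.sub_dvd_pow_sub_pow B 1 k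
  have hRB : (B - 1) * R = B ^ k - 1 := Nat.mul_div_cancel' hdvd
  have hRBz : ((B : ℤ) - 1) * (R : ℤ) = (B : ℤ) ^ k - 1 := by
    have h := congrArg (fun x : ℕ => (x : ℤ)) hRB
    push_cast [Nat.cast_sub (show 1 ≤ B by omega), Nat.cast_sub hBk1] at h
    exact h
  have ha1 : 1 ≤ a := le_trans (Nat.one_le_pow _ _ (by omega)) h1
  -- integer versions of the hypotheses
  have h5z : ((a : ℤ) * B + b) * c = (a : ℤ) * ((b : ℤ) * (B : ℤ) ^ k + c) := by
    exact_mod_cast h5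
  have haz : (1 : ℤ) ≤ (a : ℤ) := by exact_mod_cast ha1
  have hBz : (2 : ℤ) ≤ (B : ℤ) := by exact_mod_cast hB
  have hbz : (b : ℤ) < (B : ℤ) := by exact_mod_cast h3
  have hcz : (c : ℤ) < (B : ℤ) ^ k := by exact_mod_cast h4
  have h1z : (B : ℤ) ^ (k - 1) ≤ (a : ℤ) := by exact_mod_cast h1
  -- b ≥ 1
  have hb1 : 1 ≤ b := by
    by_contra hb0'
    have hb0 : b = 0 := by omega
    subst hb0
    have e : (a : ℤ) * c * ((B : ℤ) - 1) = 0 := by linear_combination h5z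
    have hc0 : c = 0 := by
      rcases mul_eq_zero.mp e with h | h
      · rcases mul_eq_zero.mp h with h' | h'
        · exfalso; linarith
        · exact_mod_cast h'
      · exfalso; linarith
    exact h6c ⟨rfl, hc0⟩
  -- c ≥ 1
  have hc1 : 1 ≤ c := by
    by_contra hc0'
    have hc0 : c = 0 := by omega
    subst hc0
    have e : (a : ℤ) * ((b : ℤ) * (B : ℤ) ^ k) = 0 := by linear_combination - h5z
    have hb0 : b = 0 := by
      rcases mul_eq_zero.mp e with h | h
      · exfalso; linarith
      · rcases mul_eq_zero.mp h with h' | h'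
        · exact_mod_cast h'
        · exfalso
          have hpk : (0 : ℤ) < (B : ℤ) ^ k := by positivity
          linarith
    exact h6c ⟨hb0, rfl⟩
  have hb1z : (1 : ℤ) ≤ (b : ℤ) := by exact_mod_cast hb1
  have hc1z : (1 : ℤ) ≤ (c : ℤ) := by exact_mod_cast hc1
  -- the key identity
  have hkey : (a : ℤ) * ((b : ℤ) * (B : ℤ) ^ k - (c : ℤ) * ((B : ℤ) - 1))
      = (b : ℤ) * (c : ℤ) := by linear_combination - h5z
  -- positivity of the bracket
  have hXpos : (0 : ℤ) < (b : ℤ) * (B : ℤ) ^ k - (c : ℤ) * ((B : ℤ) - 1) := by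
    by_contra hX
    push_neg at hX
    have hbc : (0 : ℤ) < (b : ℤ) * (c : ℤ) := by positivity
    have : (a : ℤ) * ((b : ℤ) * (B : ℤ) ^ k - (c : ℤ) * ((B : ℤ) - 1)) ≤ 0 :=
      mul_nonpos_of_nonneg_of_nonpos (by linarith) hX
    linarith [hkey]
  -- c ≤ b * R
  have hcleR : c ≤ b * R := by
    by_contra h
    push_neg at h
    have hc' : (b : ℤ) * (R : ℤ) + 1 ≤ (c : ℤ) := by exact_mod_cast h
    have hmul : ((b : ℤ) * R + 1) * ((B : ℤ) - 1) ≤ (c : ℤ) * ((B : ℤ) - 1) :=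
      mul_le_mul_of_nonneg_right hc' (by linarith)
    have heq : ((b : ℤ) * R + 1) * ((B : ℤ) - 1)
        = (b : ℤ) * (B : ℤ) ^ k - b + B - 1 := by linear_combination (b : ℤ) * hRBz
    linarith [hXpos, hmul, heq, hbz]
  -- c ≠ b * R
  have hcne : c ≠ b * R := by
    intro hceq
    have hcz2 : (c : ℤ) = (b : ℤ) * (R : ℤ) := by exact_mod_cast hceq
    have hX : (b : ℤ) * (B : ℤ) ^ k - (c : ℤ) * ((B : ℤ) - 1) = (b : ℤ) := by
      rw [hcz2]; linear_combination (-(b : ℤ)) * hRBz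
    rw [hX] at hkey
    have hac : (a : ℤ) = (c : ℤ) := by
      have hbne : (b : ℤ) ≠ 0 := by linarith
      apply mul_left_cancel₀ hbne
      linarith [hkey]
    have hacn : a = c := by exact_mod_cast hac
    exact h7 ⟨hacn.trans hceq, hceq⟩
  have hclt : c < b * R := lt_of_le_of_ne hcleR hcne
  -- n := b * R - c
  have hnz : ((b * R - c : ℕ) : ℤ) = (b : ℤ) * R - c := by
    push_cast [Nat.cast_sub hcleR]; ring
  have hn1 : 1 ≤ b * R - c := Nat.sub_pos_of_lt hclt
  have hkey2 : (a : ℤ) * ((b : ℤ) + ((b * R - c : ℕ) : ℤ) * ((B : ℤ) - 1))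
      = (b : ℤ) * (c : ℤ) := by
    rw [hnz]; linear_combination hkey + (a : ℤ) * (b : ℤ) * hRBz
  -- n < b
  have hnltb : b * R - c < b := by
    by_contra h
    push_neg at h
    have hbn : (b : ℤ) ≤ ((b * R - c : ℕ) : ℤ) := by exact_mod_cast h
    set n : ℕ := b * R - c with hndef
    have hpow : (B : ℤ) ^ (k - 1) * (B : ℤ) = (B : ℤ) ^ k := by
      rw [← pow_succ]; congr 1; omega
    have hBm1 : (0 : ℤ) ≤ (B : ℤ) - 1 := by linarith
    have e1 : (b : ℤ) + (b : ℤ) * ((B : ℤ) - 1) ≤ (b : ℤ) + (n : ℤ) * ((B : ℤ) - 1) := by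
      have := mul_le_mul_of_nonneg_right hbn hBm1
      linarith
    have hbrack : (0 : ℤ) ≤ (b : ℤ) + (n : ℤ) * ((B : ℤ) - 1) := by
      have : (0 : ℤ) ≤ (n : ℤ) * ((B : ℤ) - 1) := mul_nonneg (by positivity) hBm1
      linarith
    have e2 : (B : ℤ) ^ (k - 1) * ((b : ℤ) + (n : ℤ) * ((B : ℤ) - 1))
        ≤ (a : ℤ) * ((b : ℤ) + (n : ℤ) * ((B : ℤ) - 1)) :=
      mul_le_mul_of_nonneg_right h1z hbrack
    have e3 : (B : ℤ) ^ (k - 1) * ((b : ℤ) + (b : ℤ) * ((B : ℤ) - 1))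
        = (b : ℤ) * (B : ℤ) ^ k := by linear_combination (b : ℤ) * hpow
    have e4 : (B : ℤ) ^ (k - 1) * ((b : ℤ) + (b : ℤ) * ((B : ℤ) - 1))
        ≤ (B : ℤ) ^ (k - 1) * ((b : ℤ) + (n : ℤ) * ((B : ℤ) - 1)) :=
      mul_le_mul_of_nonneg_left e1 (by positivity)
    have e5 : (b : ℤ) * (c : ℤ) < (b : ℤ) * (B : ℤ) ^ k :=
      mul_lt_mul_of_pos_left hcz (by linarith)
    linarith [hkey2, e2, e3, e4, e5]
  -- n + 1 ≠ b  (the divisibility obstruction)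
  have hne : b * R - c + 1 ≠ b := by
    intro hb_eq
    set n : ℕ := b * R - c with hndef
    have hkeyN : a * (b + n * (B - 1)) = b * c := by
      zify [show 1 ≤ B by omega]
      linear_combination hkey2
    have h' : n * (B - 1) + n = n * B := by
      rw [← Nat.mul_succ]; congr 1; omega
    have hDnat : b + n * (B - 1) = n * B + 1 := by
      have hb' : n + 1 = b := hb_eq
      linarith [h']
    have hdvdD : (n * B + 1) ∣ b * c := by
      refine ⟨a, ?_⟩
      rw [← hDnat]
      linarith [hkeyN]
    set D : ℕ := n * B + 1 with hDdef
    have h0 : ((b * c : ℕ) : ZMod D) = 0 :=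
      (ZMod.natCast_eq_zero_iff _ _).mpr hdvdD
    have hgeom := geom_zmod D n B rfl k
    have hRcast : ((R : ℕ) : ZMod D) = ∑ i ∈ Finset.range k, (B : ZMod D) ^ i := by
      rw [hRdef, ← Nat.geomSum_eq hB k]
      push_cast
      rfl
    have hbcast : ((b : ℕ) : ZMod D) = (n : ZMod D) + 1 := by
      rw [← hb_eq]; push_cast; ring
    have hnleBR : n ≤ b * R := Nat.sub_le _ _
    have hcn : c = b * R - n := (Nat.sub_sub_self hcleR).symm
    have hccast : ((c : ℕ) : ZMod D)
        = ((n : ZMod D) + 1) * (∑ i ∈ Finset.range k, (B : ZMod D) ^ i) - n := by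
      rw [hcn]
      push_cast [Nat.cast_sub hnleBR]
      rw [hRcast, hbcast]
    have h0' : ((n : ZMod D) + 1)
        * (((n : ZMod D) + 1) * (∑ i ∈ Finset.range k, (B : ZMod D) ^ i) - n) = 0 := by
      push_cast at h0
      rw [hbcast, hccast] at h0
      exact h0
    have hfinal : (n : ZMod D) * ((n : ZMod D) + 1) * (-1 : ZMod D) ^ k = 0 := by
      linear_combination (-(n : ZMod D) ^ k) * h0' + ((n : ZMod D) + 1) * hgeom
    have h00 : ((n * (n + 1) : ℕ) : ZMod D) = 0 := by
      push_cast
      rcases Nat.even_or_odd k with he | ho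
      · rw [he.neg_one_pow, mul_one] at hfinal
        exact hfinal
      · rw [ho.neg_one_pow, mul_neg_one, neg_eq_zero] at hfinal
        exact hfinal
    have hdvd2 : D ∣ n * (n + 1) := (ZMod.natCast_eq_zero_iff _ _).mp h00
    have hpos : 0 < n * (n + 1) := Nat.mul_pos (by omega) (by omega)
    have hle := Nat.le_of_dvd hpos hdvd2
    have hlt : n * (n + 1) < D := by
      calc n * (n + 1) = n * b := by rw [hb_eq]
        _ ≤ n * B := Nat.mul_le_mul_left n (by omega)
        _ < n * B + 1 := Nat.lt_succ_self _
    exact absurd hle (Nat.not_le.mpr hlt)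
  have hfin : b * R - c + 2 ≤ b := by
    have h1' : b * R - c + 1 ≤ b := Nat.succ_le_of_lt hnltb
    exact Nat.succ_le_of_lt (lt_of_le_of_ne h1' hne)
  exact ⟨hclt, hfin, hkey, hXpos⟩

/-- The set of nontrivial solutions of `P*_k` in base `B` has at most
`(B − 2)·(B − 3)/2` elements. -/
theorem stmt_4 (B k : ℕ) (hB : 2 ≤ B) (hk : 1 ≤ k) :
    {p : ℕ × ℕ × ℕ |
      B ^ (k - 1) ≤ p.1 ∧ p.1 < B ^ k ∧ p.2.1 < B ∧ p.2.2 < B ^ k ∧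
      (p.1 * B + p.2.1) * p.2.2 = p.1 * (p.2.1 * B ^ k + p.2.2) ∧
      (¬(p.1 = 0 ∧ p.2.1 = 0) ∧ ¬(p.1 = 0 ∧ p.2.2 = 0) ∧
       ¬(p.2.1 = 0 ∧ p.2.2 = 0)) ∧
      ¬(p.1 = p.2.1 * ((B ^ k - 1) / (B - 1)) ∧
        p.2.2 = p.2.1 * ((B ^ k - 1) / (B - 1)))}.ncard ≤
    (B - 2) * (B - 3) / 2 := by
  classical
  set R := (B ^ k - 1) / (B - 1) with hRdef
  set T : Finset ((_ : ℕ) × ℕ) :=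
    (Finset.range B).sigma (fun x => Finset.Icc 1 (x - 2)) with hTdef
  set f : ℕ × ℕ × ℕ → (_ : ℕ) × ℕ := fun p => ⟨p.2.1, p.2.1 * R - p.2.2⟩ with hfdef
  have hmaps : ∀ p ∈ {p : ℕ × ℕ × ℕ |
      B ^ (k - 1) ≤ p.1 ∧ p.1 < B ^ k ∧ p.2.1 < B ∧ p.2.2 < B ^ k ∧
      (p.1 * B + p.2.1) * p.2.2 = p.1 * (p.2.1 * B ^ k + p.2.2) ∧
      (¬(p.1 = 0 ∧ p.2.1 = 0) ∧ ¬(p.1 = 0 ∧ p.2.2 = 0) ∧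
       ¬(p.2.1 = 0 ∧ p.2.2 = 0)) ∧
      ¬(p.1 = p.2.1 * R ∧ p.2.2 = p.2.1 * R)}, f p ∈ (T : Set ((_ : ℕ) × ℕ)) := by
    rintro ⟨a, b, c⟩ ⟨h1, h2, h3, h4, h5, ⟨h6a, h6b, h6c⟩, h7⟩
    obtain ⟨hclt, hfin, -, -⟩ := sol_facts B k hB hk a b c h1 h2 h3 h4 h5 h6c h7
    simp only [hfdef, hTdef, Finset.coe_sigma, Set.mem_sigma_iff, Finset.mem_coe,
      Finset.mem_range, Finset.mem_Icc]
    refine ⟨h3, Nat.sub_pos_of_lt hclt, Nat.le_sub_of_add_le hfin⟩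
  have hinj : Set.InjOn f {p : ℕ × ℕ × ℕ |
      B ^ (k - 1) ≤ p.1 ∧ p.1 < B ^ k ∧ p.2.1 < B ∧ p.2.2 < B ^ k ∧
      (p.1 * B + p.2.1) * p.2.2 = p.1 * (p.2.1 * B ^ k + p.2.2) ∧
      (¬(p.1 = 0 ∧ p.2.1 = 0) ∧ ¬(p.1 = 0 ∧ p.2.2 = 0) ∧
       ¬(p.2.1 = 0 ∧ p.2.2 = 0)) ∧
      ¬(p.1 = p.2.1 * R ∧ p.2.2 = p.2.1 * R)} := by
    rintro ⟨a, b, c⟩ ⟨h1, h2, h3, h4, h5, ⟨h6a, h6b, h6c⟩, h7⟩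
      ⟨a', b', c'⟩ ⟨h1', h2', h3', h4', h5', ⟨h6a', h6b', h6c'⟩, h7'⟩ heq
    obtain ⟨hclt, -, hkey, hXpos⟩ := sol_facts B k hB hk a b c h1 h2 h3 h4 h5 h6c h7
    obtain ⟨hclt', -, hkey', -⟩ := sol_facts B k hB hk a' b' c' h1' h2' h3' h4' h5' h6c' h7'
    simp only [hfdef] at heq
    rw [Sigma.mk.inj_iff] at heq
    obtain ⟨hbb, hsnd⟩ := heq
    subst hbb
    have hnn : b * R - c = b * R - c' := eq_of_heq hsnd
    have hcc : c = c' := by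
      have e1 : c = b * R - (b * R - c) := (Nat.sub_sub_self hclt.le).symm
      have e2 : c' = b * R - (b * R - c') := (Nat.sub_sub_self hclt'.le).symm
      rw [e1, e2, hnn]
    subst hcc
    have haa : (a : ℤ) = (a' : ℤ) := by
      have := hkey.trans hkey'.symm
      exact mul_right_cancel₀ (ne_of_gt hXpos) this
    have : a = a' := by exact_mod_cast haa
    simp [this]
  have hcard := Set.ncard_le_ncard_of_injOn f hmaps hinj T.finite_toSet
  refine le_trans hcard ?_
  rw [Set.ncard_coe_finset, hTdef, Finset.card_sigma]
  have hIcc : ∀ x : ℕ, (Finset.Icc 1 (x - 2)).card = x - 2 := by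
    intro x; rw [Nat.card_Icc]; omega
  simp only [hIcc]
  rw [Nat.le_div_iff_mul_le (by norm_num : 0 < 2)]
  rw [mul_comm]
  exact le_of_eq (tri_sum B)
end

section
/- Let B ≥ 2 be an integer base and let k be an integer with k ≥ 5 and k ≥ 2·log₂(B − 1) + 2. Then every digit-block triple (a, b, c) with property P*_k is the extension of a digit-block triple with property P*_{k−1}; that is, there exist natural numbers a', c' with B^{k−2} ≤ a' < B^{k−1}, 0 ≤ c' < B^{k−1}, such that a = a'·B + b, c = b·B^{k−1} + c', and (a', b, c') has property P*_{k−1}. -/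
lemma geom_nat (B k : ℕ) (hB : 1 ≤ B) :
    (B - 1) * ∑ i ∈ Finset.range k, B ^ i = B ^ k - 1 := by
  have h1 : (1:ℕ) ≤ B ^ k := Nat.one_le_pow _ _ (by omega)
  zify [hB, h1]
  linarith [geom_sum_mul (B:ℤ) k]

lemma repdiv (B k : ℕ) (hB : 2 ≤ B) :
    (B ^ k - 1) / (B - 1) = ∑ i ∈ Finset.range k, B ^ i := by
  rw [← geom_nat B k (by omega)]
  exact Nat.mul_div_cancel_left _ (by omega)

lemma aux_dvd (B k g : ℕ) (hB : 2 ≤ B) (hk : 1 ≤ k) (hg : g ∣ B ^ k)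
    (hlt : g < 2 ^ k) : g ∣ B ^ (k - 1) := by
  have hg0 : g ≠ 0 := by
    rintro rfl
    have : B ^ k = 0 := Nat.eq_zero_of_zero_dvd hg
    exact absurd this (pow_ne_zero _ (by omega))
  rw [← Nat.factorization_le_iff_dvd hg0 (pow_ne_zero _ (by omega : B ≠ 0))]
  intro p
  have hle : g.factorization p ≤ (B ^ k).factorization p :=
    (Nat.factorization_le_iff_dvd hg0 (pow_ne_zero _ (by omega : B ≠ 0))).2 hg p
  rw [Nat.factorization_pow] at hle ⊢
  simp only [Finsupp.smul_apply, smul_eq_mul] at hle ⊢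
  by_cases hp : p.Prime
  · by_cases he : B.factorization p = 0
    · simp [he] at hle ⊢; omega
    · by_contra hcon
      push_neg at hcon
      have hf : k ≤ g.factorization p := by
        have h1 : 1 ≤ B.factorization p := by omega
        have h2 : (k-1) * 1 ≤ (k-1) * B.factorization p := Nat.mul_le_mul_left _ h1
        omega
      have h1 : p ^ (g.factorization p) ∣ g := Nat.ordProj_dvd g p
      have h2 : p ^ (g.factorization p) ≤ g := Nat.le_of_dvd (by omega) h1
      have h3 : 2 ^ k ≤ p ^ (g.factorization p) := by
        calc 2 ^ k ≤ 2 ^ (g.factorization p) := Nat.pow_le_pow_right (by norm_num) hf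
        _ ≤ p ^ (g.factorization p) := Nat.pow_le_pow_left hp.two_le _
      omega
  · simp [Nat.factorization_eq_zero_of_not_prime g hp]

lemma log_bound (B k : ℕ) (hB : 2 ≤ B) (hk : 2 ≤ k)
    (hklog : 2 * Real.logb 2 ((B : ℝ) - 1) + 2 ≤ (k : ℝ)) :
    (B - 1) ^ 2 ≤ 2 ^ (k - 2) := by
  have hx : (0:ℝ) < (B:ℝ) - 1 := by
    have : (2:ℝ) ≤ B := by exact_mod_cast hB
    linarith
  have h2 : Real.logb 2 (((B:ℝ) - 1) ^ 2) ≤ (k:ℝ) - 2 := by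
    rw [Real.logb_pow]; push_cast; linarith
  have h3 : ((B:ℝ) - 1) ^ 2 ≤ (2:ℝ) ^ ((k:ℝ) - 2) :=
    (Real.logb_le_iff_le_rpow (by norm_num) (by positivity)).1 h2
  have h4 : (2:ℝ) ^ ((k:ℝ) - 2) = (2:ℝ) ^ ((k - 2 : ℕ) : ℝ) := by
    congr 1
    push_cast [Nat.cast_sub hk]
    ring
  rw [h4, Real.rpow_natCast] at h3
  have h5 : (((B - 1) ^ 2 : ℕ) : ℝ) ≤ ((2 ^ (k - 2) : ℕ) : ℝ) := by
    push_cast [Nat.cast_sub (by omega : 1 ≤ B)]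
    exact h3
  exact_mod_cast h5

set_option maxHeartbeats 2000000 in
/-- Saturation: beyond `k = max{5, 2·log₂(B−1) + 2}`, every nontrivial solution
of `P*_k` is the extension of a nontrivial solution of `P*_{k−1}`. -/
theorem stmt_5 (B k a b c : ℕ) (hB : 2 ≤ B) (hk5 : 5 ≤ k)
    (hklog : 2 * Real.logb 2 ((B : ℝ) - 1) + 2 ≤ (k : ℝ))
    (ha₁ : B ^ (k - 1) ≤ a) (ha₂ : a < B ^ k) (hb : b < B) (hc : c < B ^ k)
    (hP : (a * B + b) * c = a * (b * B ^ k + c))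
    (hz : ¬(a = 0 ∧ b = 0) ∧ ¬(a = 0 ∧ c = 0) ∧ ¬(b = 0 ∧ c = 0))
    (hne : ¬(a = b * ((B ^ k - 1) / (B - 1)) ∧ c = b * ((B ^ k - 1) / (B - 1)))) :
    ∃ a' c' : ℕ,
      B ^ (k - 2) ≤ a' ∧ a' < B ^ (k - 1) ∧ c' < B ^ (k - 1) ∧
      a = a' * B + b ∧ c = b * B ^ (k - 1) + c' ∧
      (a' * B + b) * c' = a' * (b * B ^ (k - 1) + c') ∧
      (¬(a' = 0 ∧ b = 0) ∧ ¬(a' = 0 ∧ c' = 0) ∧ ¬(b = 0 ∧ c' = 0)) ∧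
      ¬(a' = b * ((B ^ (k - 1) - 1) / (B - 1)) ∧
        c' = b * ((B ^ (k - 1) - 1) / (B - 1))) := by
  have hB1 : (1:ℕ) ≤ B := by omega
  obtain ⟨m, rfl⟩ : ∃ m, k = m + 2 := ⟨k - 2, by omega⟩
  have e1 : m + 2 - 1 = m + 1 := by omega
  have e2 : m + 2 - 2 = m := by omega
  rw [e1] at ha₁
  obtain ⟨S, hSdef⟩ : ∃ S, S = ∑ i ∈ Finset.range (m+2), B ^ i := ⟨_, rfl⟩
  obtain ⟨S', hS'def⟩ : ∃ S', S' = ∑ i ∈ Finset.range (m+1), B ^ i := ⟨_, rfl⟩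
  have hapos : 0 < a := lt_of_lt_of_le (pow_pos (by omega) _) ha₁
  have hb1 : 1 ≤ b := by
    by_contra h
    have hb0 : b = 0 := by omega
    subst hb0
    rcases Nat.eq_zero_or_pos c with hc0 | hcpos
    · exact hz.2.2 ⟨rfl, hc0⟩
    · have h1 : a * B * c = a * c := by simpa using hP
      nlinarith [mul_pos hapos hcpos]
  have hc1 : 1 ≤ c := by
    by_contra h
    have hc0 : c = 0 := by omega
    subst hc0
    have h0 : 0 < B ^ (m+2) := pow_pos (by omega) _
    nlinarith [hP, mul_pos (mul_pos hapos (show 0 < b by omega)) h0]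
  -- integer casts
  have hBZ : (2:ℤ) ≤ (B:ℤ) := by exact_mod_cast hB
  have haZ : (B:ℤ)^(m+1) ≤ (a:ℤ) := by exact_mod_cast ha₁
  have haZ2 : (a:ℤ) < (B:ℤ)^(m+2) := by exact_mod_cast ha₂
  have hbZ : (b:ℤ) < B := by exact_mod_cast hb
  have hbZ1 : 1 ≤ (b:ℤ) := by exact_mod_cast hb1
  have hcZ : (c:ℤ) < (B:ℤ)^(m+2) := by exact_mod_cast hc
  have hcZ1 : 1 ≤ (c:ℤ) := by exact_mod_cast hc1
  have haZ1 : 1 ≤ (a:ℤ) := by exact_mod_cast hapos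
  have hSZnn : 0 ≤ (S:ℤ) := Int.natCast_nonneg S
  have hS'Znn : 0 ≤ (S':ℤ) := Int.natCast_nonneg S'
  have hScast : (S:ℤ) = ∑ i ∈ Finset.range (m+2), (B:ℤ)^i := by rw [hSdef]; push_cast; rfl
  have hS'cast : (S':ℤ) = ∑ i ∈ Finset.range (m+1), (B:ℤ)^i := by rw [hS'def]; push_cast; rfl
  have hE2 : (B:ℤ)^(m+2) = ((B:ℤ)-1)*S + 1 := by
    rw [hScast]; linarith [geom_sum_mul (B:ℤ) (m+2)]
  have hE2' : (B:ℤ)^(m+1) = ((B:ℤ)-1)*S' + 1 := by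
    rw [hS'cast]; linarith [geom_sum_mul (B:ℤ) (m+1)]
  clear hScast hS'cast
  have hSsplit : S = S' + B^(m+1) := by
    rw [hSdef, hS'def, Finset.sum_range_succ]
  have hSsumZ : (S:ℤ) = (S':ℤ) + (B:ℤ)^(m+1) := by exact_mod_cast congrArg (Nat.cast : ℕ → ℤ) hSsplit
  have hSmulZ : (S:ℤ) = (B:ℤ) * S' + 1 := by
    have h : ((B:ℤ)-1) * (S:ℤ) = ((B:ℤ)-1) * ((B:ℤ)*S'+1) := by
      linear_combination -hE2 + (B:ℤ)*hE2'
    exact mul_left_cancel₀ (sub_ne_zero.mpr (by intro h1; rw [h1] at hBZ; norm_num at hBZ)) h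
  have hS'ge : B^m ≤ S' := by
    rw [hS'def]
    exact Finset.single_le_sum (f := fun i => B^i) (fun i _ => Nat.zero_le _)
      (Finset.mem_range.2 (by omega))
  have hS'Z : (B:ℤ)^m ≤ (S':ℤ) := by exact_mod_cast hS'ge
  have hPZ : ((a:ℤ)*B + b) * c = (a:ℤ) * (b*(B:ℤ)^(m+2) + c) := by exact_mod_cast hP
  have hCD : (c:ℤ) * ((a:ℤ)*((B:ℤ)-1) + b) = (a:ℤ) * b * (B:ℤ)^(m+2) := by linear_combination hPZ
  have hvu : ((b:ℤ)*S - c) * ((a:ℤ)*((B:ℤ)-1) + b) = (b:ℤ) * ((b:ℤ)*S - a) := by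
    linear_combination -hCD - ((a:ℤ)*b)*hE2
  have hbZ' : (b:ℤ) ≤ (B:ℤ) - 1 := by omega
  have hDpos : (0:ℤ) < (a:ℤ)*((B:ℤ)-1) + b := by
    have h1 : (1:ℤ)*((B:ℤ)-1) ≤ (a:ℤ)*((B:ℤ)-1) := mul_le_mul_of_nonneg_right haZ1 (by linarith only [hBZ])
    linarith only [h1, hbZ1, hBZ]
  -- nontrivial: reformulated
  have hne' : ¬(a = b * S ∧ c = b * S) := by
    rw [hSdef, ← repdiv B (m+2) hB]; exact hne
  -- v ≥ 0
  have hv0 : 0 ≤ (b:ℤ)*S - c := by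
    by_contra h
    push_neg at h
    have hv1' : (b:ℤ)*S - c ≤ -1 := by linarith [Int.lt_iff_add_one_le.mp h]
    have h2 : ((b:ℤ)*S - c) * ((a:ℤ)*((B:ℤ)-1) + b) ≤ (-1) * ((a:ℤ)*((B:ℤ)-1) + b) :=
      mul_le_mul_of_nonneg_right hv1' (le_of_lt hDpos)
    have h3 : (b:ℤ)*a ≤ ((B:ℤ)-1)*a := mul_le_mul_of_nonneg_right (by linarith only [hbZ]) (by linarith only [haZ1])
    have h4 : 0 ≤ (b:ℤ)*b*S := by positivity
    linarith only [hvu, h2, h3, h4, hbZ1]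
  have hune : ¬((b:ℤ)*S - a = 0 ∧ (b:ℤ)*S - c = 0) := by
    rintro ⟨h1, h2⟩
    refine hne' ⟨?_, ?_⟩
    · exact_mod_cast (by linarith only [h1] : (a:ℤ) = (b:ℤ)*S)
    · exact_mod_cast (by linarith only [h2] : (c:ℤ) = (b:ℤ)*S)
  have hvpos : 0 < (b:ℤ)*S - c := by
    rcases lt_or_eq_of_le hv0 with h | h
    · exact h
    · exfalso
      have h2 : (b:ℤ) * ((b:ℤ)*S - a) = 0 := by rw [← hvu, ← h]; ring
      rcases mul_eq_zero.mp h2 with h' | h'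
      · linarith only [h', hbZ1]
      · exact hune ⟨h', h.symm⟩
  have hv1 : 1 ≤ (b:ℤ)*S - c := by linarith only [Int.lt_iff_add_one_le.mp hvpos]
  have hupos : 0 < (b:ℤ)*S - a := by
    by_contra h
    push_neg at h
    have h2 : (b:ℤ) * ((b:ℤ)*S - a) ≤ 0 := mul_nonpos_of_nonneg_of_nonpos (by linarith only [hbZ1]) h
    have h3 : 0 < ((b:ℤ)*S - c) * ((a:ℤ)*((B:ℤ)-1) + b) := mul_pos hvpos hDpos
    linarith only [hvu, h2, h3]
  have hu1 : 1 ≤ (b:ℤ)*S - a := by linarith only [Int.lt_iff_add_one_le.mp hupos]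
  -- v ≤ B - 2
  have hpow1pos : (0:ℤ) < (B:ℤ)^(m+1) := by positivity
  have hDlb : ((B:ℤ)-1) * (B:ℤ)^(m+1) ≤ (a:ℤ)*((B:ℤ)-1) + b := by
    have h1 := mul_le_mul_of_nonneg_right haZ (by linarith only [hBZ] : (0:ℤ) ≤ (B:ℤ)-1)
    linarith only [h1, hbZ1]
  have hvB : (b:ℤ)*S - c ≤ (B:ℤ) - 2 := by
    by_contra h
    push_neg at h
    have hv' : (B:ℤ) - 1 ≤ (b:ℤ)*S - c := by linarith only [Int.lt_iff_add_one_le.mp h]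
    have c1 : ((B:ℤ)-1) * (((B:ℤ)-1) * (B:ℤ)^(m+1)) ≤ ((b:ℤ)*S - c) * ((a:ℤ)*((B:ℤ)-1) + b) := by
      have t1 : ((B:ℤ)-1) * (((B:ℤ)-1) * (B:ℤ)^(m+1)) ≤ ((b:ℤ)*S - c) * (((B:ℤ)-1) * (B:ℤ)^(m+1)) :=
        mul_le_mul_of_nonneg_right hv' (mul_nonneg (by linarith only [hBZ]) (le_of_lt hpow1pos))
      have t2 : ((b:ℤ)*S - c) * (((B:ℤ)-1) * (B:ℤ)^(m+1)) ≤ ((b:ℤ)*S - c) * ((a:ℤ)*((B:ℤ)-1) + b) :=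
        mul_le_mul_of_nonneg_left hDlb (by linarith only [hv', hBZ])
      linarith only [t1, t2]
    have c2 : (b:ℤ) * ((b:ℤ)*S - a) ≤ ((B:ℤ)-1) * ((b:ℤ)*S - a) :=
      mul_le_mul_of_nonneg_right (by linarith only [hbZ]) (by linarith only [hu1]) 
    have c3 : (b:ℤ)*S - a ≤ ((B:ℤ)-1)*S - (B:ℤ)^(m+1) := by
      have h5 : (b:ℤ)*S ≤ ((B:ℤ)-1)*S := mul_le_mul_of_nonneg_right (by linarith only [hbZ]) hSZnn
      linarith only [h5, haZ]
    have c4 : ((B:ℤ)-1) * ((b:ℤ)*S - a) ≤ ((B:ℤ)-1) * (((B:ℤ)-1)*S - (B:ℤ)^(m+1)) :=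
      mul_le_mul_of_nonneg_left c3 (by linarith only [hBZ])
    have c7 : ((B:ℤ)-1) * (((B:ℤ)-1)*S - (B:ℤ)^(m+1)) = ((B:ℤ)-1) * (((B:ℤ)-1)*(B:ℤ)^(m+1) - 1) := by
      linear_combination (1 - (B:ℤ))*hE2
    linarith only [hvu, c1, c2, c4, c7, hBZ]
  -- key polynomial identity
  have huW : ((b:ℤ)*S - a) * ((b:ℤ) + ((b:ℤ)*S - c)*((B:ℤ)-1)) = ((b:ℤ)*S - c) * b * (B:ℤ)^(m+2) := by
    linear_combination hCD + ((a:ℤ)*b + (b:ℤ)*c - (b:ℤ)^2*S) * hE2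
  -- to ℕ
  obtain ⟨U, hU⟩ : ∃ U:ℕ, (U:ℤ) = (b:ℤ)*S - a := ⟨((b:ℤ)*S - a).toNat, Int.toNat_of_nonneg (by linarith)⟩
  obtain ⟨V, hV⟩ : ∃ V:ℕ, (V:ℤ) = (b:ℤ)*S - c := ⟨((b:ℤ)*S - c).toNat, Int.toNat_of_nonneg hv0⟩
  have hV1 : 1 ≤ V := by
    have : (1:ℤ) ≤ (V:ℤ) := by rw [hV]; exact hv1
    exact_mod_cast this
  have hU1 : 1 ≤ U := by
    have : (1:ℤ) ≤ (U:ℤ) := by rw [hU]; exact hu1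
    exact_mod_cast this
  have hVB : V ≤ B - 2 := by
    have : (V:ℤ) ≤ (B:ℤ) - 2 := by rw [hV]; exact hvB
    omega
  have hUV : U * (b + V * (B - 1)) = V * b * B ^ (m+2) := by
    have hcast : ((U * (b + V * (B-1)) : ℕ) : ℤ) = ((V * b * B^(m+2) : ℕ) : ℤ) := by
      push_cast [Nat.cast_sub hB1]
      rw [hU, hV]
      linear_combination huW
    exact_mod_cast hcast
  -- gcd and divisibility
  have hWpos : 0 < b + V * (B - 1) := by omega
  have hWle : b + V * (B - 1) ≤ (B - 1)^2 := by
    zify [hB1]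
    have hVZ2 : (V:ℤ) ≤ (B:ℤ)-2 := by rw [hV]; exact hvB
    have hp : (V:ℤ)*((B:ℤ)-1) ≤ ((B:ℤ)-2)*((B:ℤ)-1) :=
      mul_le_mul_of_nonneg_right hVZ2 (by linarith)
    linarith only [hp, hbZ']
  have h2k2 : (B - 1)^2 ≤ 2^m := by
    have := log_bound B (m+2) hB (by omega) hklog
    rwa [e2] at this
  have hgdvd : Nat.gcd (b + V * (B-1)) (B^(m+2)) ∣ B^(m+2) := Nat.gcd_dvd_right _ _
  have hgpos : 0 < Nat.gcd (b + V * (B-1)) (B^(m+2)) := Nat.gcd_pos_of_pos_left _ hWpos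
  have hgle : Nat.gcd (b + V * (B-1)) (B^(m+2)) ≤ b + V*(B-1) :=
    Nat.le_of_dvd hWpos (Nat.gcd_dvd_left _ _)
  have hglt : Nat.gcd (b + V * (B-1)) (B^(m+2)) < 2^(m+2) := by
    have h1 : (2:ℕ)^m < 2^(m+2) := Nat.pow_lt_pow_right (by norm_num) (by omega)
    have h2 : Nat.gcd (b + V * (B-1)) (B^(m+2)) ≤ 2^m := le_trans hgle (le_trans hWle h2k2)
    omega
  have hgdvd' : Nat.gcd (b + V * (B-1)) (B^(m+2)) ∣ B^(m+1) := by
    have := aux_dvd B (m+2) _ hB (by omega) hgdvd hglt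
    rwa [e1] at this
  have heq : U * ((b + V*(B-1)) / Nat.gcd (b + V * (B-1)) (B^(m+2)))
      = V * b * (B^(m+2) / Nat.gcd (b + V * (B-1)) (B^(m+2))) := by
    apply Nat.eq_of_mul_eq_mul_right hgpos
    rw [mul_assoc, Nat.div_mul_cancel (Nat.gcd_dvd_left _ _), mul_assoc, Nat.div_mul_cancel hgdvd]
    exact hUV
  have hco : Nat.Coprime ((b + V*(B-1)) / Nat.gcd (b + V * (B-1)) (B^(m+2)))
      (B^(m+2) / Nat.gcd (b + V * (B-1)) (B^(m+2))) := Nat.coprime_div_gcd_div_gcd hgpos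
  have hdvdU : B^(m+2) / Nat.gcd (b + V * (B-1)) (B^(m+2)) ∣ U := by
    apply Nat.Coprime.dvd_of_dvd_mul_right hco.symm
    exact ⟨V*b, by rw [heq]; ring⟩
  have hBU : B ∣ U := by
    have h1 : B ∣ B^(m+2) / Nat.gcd (b + V * (B-1)) (B^(m+2)) := by
      obtain ⟨t, ht⟩ := hgdvd'
      have hdiv : B^(m+2) / Nat.gcd (b + V * (B-1)) (B^(m+2)) = B * t :=
        Nat.div_eq_of_eq_mul_left hgpos
          (by
            conv_lhs => rw [show (B:ℕ)^(m+2) = B * B^(m+1) by ring, ht]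
            ring)
      rw [hdiv]
      exact Dvd.intro t rfl
    exact dvd_trans h1 hdvdU
  obtain ⟨U', hU'⟩ := hBU
  have hU'Z : (U:ℤ) = (B:ℤ) * U' := by exact_mod_cast congrArg (Nat.cast : ℕ → ℤ) hU'
  -- reconstruction
  have ha'eq : (a:ℤ) = (B:ℤ) * ((b:ℤ)*S' - U') + b := by
    linear_combination hU - hU'Z + (b:ℤ)*hSmulZ
  have hBm1 : (B:ℤ)^(m+1) = B * B^m := by ring
  have hBm2 : (B:ℤ)^(m+2) = B * B^(m+1) := by ring
  have hA'lb : (B:ℤ)^m ≤ (b:ℤ)*S' - U' := by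
    have heq2 : (B:ℤ)*((b:ℤ)*S' - U') = a - b := by linarith only [ha'eq]
    have h1 : (B:ℤ) * ((B:ℤ)^m - 1) < (B:ℤ) * ((b:ℤ)*S' - U') := by
      rw [heq2]; linarith only [haZ, hbZ', hBm1]
    have h2 : (B:ℤ)^m - 1 < (b:ℤ)*S' - U' := lt_of_mul_lt_mul_left h1 (by linarith only [hBZ])
    linarith only [Int.lt_iff_add_one_le.mp h2]
  have hA'ub : (b:ℤ)*S' - U' < (B:ℤ)^(m+1) := by
    have heq2 : (B:ℤ)*((b:ℤ)*S' - U') = a - b := by linarith only [ha'eq]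
    have h1 : (B:ℤ) * ((b:ℤ)*S' - U') < (B:ℤ) * (B:ℤ)^(m+1) := by
      rw [heq2]; linarith only [haZ2, hbZ1, hBm2]
    exact lt_of_mul_lt_mul_left h1 (by linarith only [hBZ])
  have hmge : 1 ≤ m := by omega
  have hBle : (B:ℤ) ≤ (B:ℤ)^m := by
    calc (B:ℤ) = (B:ℤ)^1 := (pow_one _).symm
    _ ≤ (B:ℤ)^m := pow_le_pow_right₀ (by linarith only [hBZ]) hmge
  have hC'pos : 0 < (b:ℤ)*S' - ((b:ℤ)*S - c) := by
    have h1 : (S':ℤ) ≤ (b:ℤ)*S' := le_mul_of_one_le_left hS'Znn hbZ1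
    linarith only [hvB, hS'Z, h1, hBle]
  have hC'ub : (b:ℤ)*S' - ((b:ℤ)*S - c) < (B:ℤ)^(m+1) := by
    have h1 : (b:ℤ)*S' ≤ ((B:ℤ)-1)*S' := mul_le_mul_of_nonneg_right (by linarith only [hbZ]) hS'Znn
    linarith only [hE2', hv1, h1]
  have hU'W : (U':ℤ) * ((b:ℤ) + ((b:ℤ)*S - c)*((B:ℤ)-1)) = ((b:ℤ)*S - c) * b * (B:ℤ)^(m+1) := by
    have hc2 : (B:ℤ) * ((U':ℤ) * ((b:ℤ) + ((b:ℤ)*S - c)*((B:ℤ)-1)))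
        = (B:ℤ) * (((b:ℤ)*S - c) * b * (B:ℤ)^(m+1)) := by
      linear_combination huW + ((b:ℤ) + ((b:ℤ)*S - c)*((B:ℤ)-1))*hU
        - ((b:ℤ) + ((b:ℤ)*S - c)*((B:ℤ)-1))*hU'Z
    exact mul_left_cancel₀ (by intro hh0; rw [hh0] at hBZ; norm_num at hBZ : (B:ℤ) ≠ 0) hc2
  have hfinalZ : (((b:ℤ)*S' - U') * B + b) * ((b:ℤ)*S' - ((b:ℤ)*S - c))
      = ((b:ℤ)*S' - U') * ((b:ℤ)*(B:ℤ)^(m+1) + ((b:ℤ)*S' - ((b:ℤ)*S - c))) := by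
    linear_combination hU'W - (((b:ℤ)*S'-U')*b + (b:ℤ)*((b:ℤ)*S' - ((b:ℤ)*S - c)) - (b:ℤ)^2*S')*hE2'
  -- assemble
  obtain ⟨a', ha'⟩ : ∃ n:ℕ, (n:ℤ) = (b:ℤ)*S' - U' :=
    ⟨((b:ℤ)*S' - U').toNat, Int.toNat_of_nonneg (by linarith only [hA'lb, le_of_lt (pow_pos (by linarith only [hBZ] : (0:ℤ) < B) m)])⟩
  obtain ⟨c', hc'⟩ : ∃ n:ℕ, (n:ℤ) = (b:ℤ)*S' - ((b:ℤ)*S - c) :=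
    ⟨((b:ℤ)*S' - ((b:ℤ)*S - c)).toNat, Int.toNat_of_nonneg (le_of_lt hC'pos)⟩
  have ha'pos : 0 < a' := by
    have h1 : (0:ℤ) < (a':ℤ) := by
      rw [ha']; linarith only [hA'lb, pow_pos (by linarith only [hBZ] : (0:ℤ) < B) m]
    exact_mod_cast h1
  refine ⟨a', c', ?_, ?_, ?_, ?_, ?_, ?_, ?_, ?_⟩
  · rw [e2]
    have h1 : (B:ℤ)^m ≤ (a':ℤ) := by rw [ha']; exact hA'lb
    exact_mod_cast h1
  · rw [e1]
    have h1 : (a':ℤ) < (B:ℤ)^(m+1) := by rw [ha']; exact hA'ub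
    exact_mod_cast h1
  · rw [e1]
    have h1 : (c':ℤ) < (B:ℤ)^(m+1) := by rw [hc']; exact hC'ub
    exact_mod_cast h1
  · have h1 : (a:ℤ) = (a':ℤ)*B + b := by rw [ha']; linarith only [ha'eq]
    exact_mod_cast h1
  · rw [e1]
    have h1 : (c:ℤ) = (b:ℤ)*(B:ℤ)^(m+1) + c' := by rw [hc']; linear_combination (b:ℤ)*hSsumZ
    exact_mod_cast h1
  · rw [e1]
    have h1 : ((a':ℤ)*B + b) * c' = (a':ℤ)*((b:ℤ)*(B:ℤ)^(m+1) + c') := by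
      rw [ha', hc']; exact hfinalZ
    exact_mod_cast h1
  · exact ⟨by omega, by omega, by omega⟩
  · rintro ⟨h1, h2⟩
    rw [e1, repdiv B (m+1) hB, ← hS'def] at h1
    have hh : (a':ℤ) = (b:ℤ) * S' := by exact_mod_cast congrArg (Nat.cast : ℕ → ℤ) h1
    have hU'0 : (U':ℤ) = 0 := by linarith only [ha', hh]
    have hU'0n : U' = 0 := by exact_mod_cast hU'0
    have hU0 : U = 0 := by rw [hU', hU'0n, Nat.mul_zero]
    have hU0Z : (U:ℤ) = 0 := by exact_mod_cast hU0
    linarith only [hU, hu1, hU0Z]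
end

section
/- Let B = p^n for a prime p and an integer n > 1, and let k ≥ 1. Then every digit-block triple (a, b, c) with property P*_k satisfies a = a₁·B^{k−1} + b·(B^{k−1} − 1)/(B − 1) and c = b·(B^k − B)/(B − 1) + c_k, where a₁ is the leading base-B digit of a and c_k = c mod B; that is, every base-B digit of a other than the first equals b, and every base-B digit of c other than the last equals b, so the solution is a (k−1)-fold extension of the P*_1 solution (a₁, b, c_k). -/
set_option maxHeartbeats 1000000

open Finset in
/-- In a prime-power base `B = p^n` (`n > 1`), every nontrivial solution of
`P*_k` is a `(k−1)`-fold extension of a solution of `P*_1`: all digits of `a`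
other than the first equal `b`, and all digits of `c` other than the last
equal `b`. -/
theorem stmt_6 (B p n k a b c : ℕ) (hp : p.Prime) (hn : 1 < n) (hB : B = p ^ n)
    (hk : 1 ≤ k)
    (ha₁ : B ^ (k - 1) ≤ a) (ha₂ : a < B ^ k) (hb : b < B) (hc : c < B ^ k)
    (hP : (a * B + b) * c = a * (b * B ^ k + c))
    (hz : ¬(a = 0 ∧ b = 0) ∧ ¬(a = 0 ∧ c = 0) ∧ ¬(b = 0 ∧ c = 0))
    (hne : ¬(a = b * ((B ^ k - 1) / (B - 1)) ∧ c = b * ((B ^ k - 1) / (B - 1)))) :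
    a = (a / B ^ (k - 1)) * B ^ (k - 1) + b * ((B ^ (k - 1) - 1) / (B - 1)) ∧
    c = b * ((B ^ k - B) / (B - 1)) + c % B := by
  obtain ⟨k', rfl⟩ : ∃ k', k = k' + 1 := ⟨k - 1, by omega⟩
  simp only [Nat.add_sub_cancel] at ha₁ ⊢
  have hB2 : 2 ≤ B := by
    subst hB
    calc 2 ≤ p := hp.two_le
    _ ≤ p ^ n := Nat.le_self_pow (by omega) p
  have hB1 : 1 ≤ B := by omega
  have hBk0 : 0 < B ^ k' := pow_pos (by omega) _
  have ha0 : 0 < a := lt_of_lt_of_le hBk0 ha₁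
  -- b, c positive
  have hb0 : 0 < b := by
    rcases Nat.eq_zero_or_pos b with h | h
    · subst h
      have h2 : a * c * B = a * c * 1 := by ring_nf; ring_nf at hP; linarith
      rcases Nat.eq_zero_or_pos (a * c) with h3 | h3
      · have : c = 0 := by
          rcases Nat.mul_eq_zero.mp h3 with h4 | h4
          · omega
          · exact h4
        exact absurd ⟨rfl, this⟩ hz.2.2
      · have : B = 1 := Nat.eq_of_mul_eq_mul_left h3 h2
        omega
    · exact h
  have hc0 : 0 < c := by
    rcases Nat.eq_zero_or_pos c with h | h
    · subst h
      simp only [mul_zero, add_zero] at hP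
      have : b = 0 := by
        rcases Nat.mul_eq_zero.mp hP.symm with h1 | h1
        · omega
        · rcases Nat.mul_eq_zero.mp h1 with h2 | h2
          · exact h2
          · exact absurd h2 (by positivity)
      exact absurd ⟨this, rfl⟩ hz.2.2
    · exact h
  -- integer setup
  have hPz : ((a : ℤ) * B + b) * c = a * (b * B ^ (k' + 1) + c) := by exact_mod_cast hP
  obtain ⟨S', hS'def⟩ : ∃ x : ℤ, x = ∑ i ∈ range k', (B : ℤ) ^ i := ⟨_, rfl⟩
  obtain ⟨S, hSdef⟩ : ∃ x : ℤ, x = ∑ i ∈ range (k' + 1), (B : ℤ) ^ i := ⟨_, rfl⟩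
  have hS' : S' * ((B : ℤ) - 1) = (B : ℤ) ^ k' - 1 := by rw [hS'def]; exact geom_sum_mul _ _
  have hS : S * ((B : ℤ) - 1) = (B : ℤ) ^ (k' + 1) - 1 := by rw [hSdef]; exact geom_sum_mul _ _
  have hSsucc : S = B * S' + 1 := by
    rw [hSdef, hS'def, Finset.sum_range_succ', Finset.mul_sum]
    simp [pow_succ, mul_comm]
  obtain ⟨A, hAdef⟩ : ∃ x : ℤ, x = (a : ℤ) * ((B : ℤ) - 1) + b := ⟨_, rfl⟩
  obtain ⟨E, hEdef⟩ : ∃ x : ℤ, x = (b : ℤ) * (B : ℤ) ^ (k' + 1) - (c : ℤ) * ((B : ℤ) - 1) := ⟨_, rfl⟩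
  have hAE : A * E = (b : ℤ) ^ 2 * (B : ℤ) ^ (k' + 1) := by
    rw [hAdef, hEdef]; linear_combination (1 - (B : ℤ)) * hPz
  have hA0 : 0 < A := by
    rw [hAdef]
    have : (0 : ℤ) < a := by exact_mod_cast ha0
    nlinarith [show (2 : ℤ) ≤ B by exact_mod_cast hB2, show (0 : ℤ) < b by exact_mod_cast hb0]
  have hE0 : 0 < E := by
    have h1 : 0 < A * E := by
      rw [hAE]
      have : (0 : ℤ) < b := by exact_mod_cast hb0
      positivity
    rcases mul_pos_iff.mp h1 with ⟨_, h⟩ | ⟨h, _⟩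
    · exact h
    · linarith
  -- E = b + m (B-1) with 0 ≤ m ≤ b - 1
  obtain ⟨m, hmdef⟩ : ∃ x : ℤ, x = (b : ℤ) * S - c := ⟨_, rfl⟩
  have hEm : E = b + m * ((B : ℤ) - 1) := by
    rw [hEdef, hmdef]; linear_combination (-(b : ℤ)) * hS
  have hbB : (b : ℤ) ≤ (B : ℤ) - 1 := by
    have : (b : ℤ) < B := by exact_mod_cast hb
    omega
  have hBpos : (0:ℤ) ≤ (B:ℤ) - 1 := by
    have : (2:ℤ) ≤ B := by exact_mod_cast hB2
    omega
  have hm0 : 0 ≤ m := by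
    by_contra h
    push_neg at h
    have h1 : m ≤ -1 := by omega
    have h2 : m * ((B:ℤ) - 1) ≤ (-1) * ((B:ℤ) - 1) := mul_le_mul_of_nonneg_right h1 hBpos
    linarith [hE0, hEm.ge, hbB]
  -- size bound : (B-1) * E < b^2 * B
  have hsize : ((B : ℤ) - 1) * E < (b : ℤ) ^ 2 * B := by
    have hAgt : ((B : ℤ) - 1) * (B : ℤ) ^ k' < A := by
      rw [hAdef]
      have h1 : ((B : ℤ)) ^ k' ≤ a := by exact_mod_cast ha₁
      have h2 : (0 : ℤ) < b := by exact_mod_cast hb0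
      nlinarith [show (2 : ℤ) ≤ B by exact_mod_cast hB2]
    have h3 : ((B : ℤ) - 1) * (B : ℤ) ^ k' * E < A * E := by
      exact mul_lt_mul_of_pos_right hAgt hE0
    rw [hAE] at h3
    have h4 : ((B : ℤ) - 1) * E * (B : ℤ) ^ k' < ((b : ℤ) ^ 2 * B) * (B : ℤ) ^ k' := by
      calc ((B : ℤ) - 1) * E * (B : ℤ) ^ k' = ((B : ℤ) - 1) * (B : ℤ) ^ k' * E := by ring
      _ < (b : ℤ) ^ 2 * (B : ℤ) ^ (k' + 1) := h3
      _ = ((b : ℤ) ^ 2 * B) * (B : ℤ) ^ k' := by ring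
    exact lt_of_mul_lt_mul_right h4 (by positivity)
  have hmb : m ≤ (b : ℤ) - 1 := by
    by_contra h
    push_neg at h
    have h1 : (b:ℤ) ≤ m := by omega
    have h2 : (b:ℤ) * ((B:ℤ) - 1) ≤ m * ((B:ℤ) - 1) := mul_le_mul_of_nonneg_right h1 hBpos
    have h3 : (b:ℤ) * (B:ℤ) ≤ E := by rw [hEm]; linarith
    have hb1 : (1:ℤ) ≤ b := by exact_mod_cast hb0
    have hBz : (2:ℤ) ≤ B := by exact_mod_cast hB2
    have h4 : ((B:ℤ) - 1) * ((b:ℤ) * B) ≤ ((B:ℤ) - 1) * E := mul_le_mul_of_nonneg_left h3 hBpos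
    have h5 : (b:ℤ) ^ 2 * B ≤ ((B:ℤ) - 1) * ((b:ℤ) * B) := by nlinarith [hbB, hb1, hBz]
    linarith [hsize]
  -- natural number versions
  obtain ⟨mN, hmNdef⟩ : ∃ x : ℕ, x = m.toNat := ⟨_, rfl⟩
  have hmcast : (mN : ℤ) = m := by rw [hmNdef]; exact Int.toNat_of_nonneg hm0
  have hmNb : mN + 1 ≤ b := by omega
  -- natural-number partial sums
  obtain ⟨S'N, hS'Ndef⟩ : ∃ x : ℕ, x = ∑ i ∈ range k', B ^ i := ⟨_, rfl⟩
  have hS'Ncast : (S'N : ℤ) = S' := by rw [hS'Ndef, hS'def]; push_cast; ring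
  have hS'N : (B - 1) * S'N = B ^ k' - 1 := by
    have h1 : (1:ℕ) ≤ B ^ k' := hBk0
    have : ((B - 1) * S'N : ℕ) = ((B ^ k' - 1 : ℕ) : ℤ) := by
      push_cast [Nat.cast_sub hB1, Nat.cast_sub h1, hS'Ncast]
      linear_combination hS'
    exact_mod_cast this
  have hbS'N : b * S'N < B ^ k' := by
    have h1 : b * S'N ≤ (B - 1) * S'N := Nat.mul_le_mul_right _ (by omega)
    omega
  -- the key natural identity for c
  have hcid : c = B * (b * S'N) + (b - mN) := by
    have h1 : ((c : ℕ) : ℤ) = ((B * (b * S'N) + (b - mN) : ℕ) : ℤ) := by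
      push_cast [Nat.cast_sub (show mN ≤ b by omega), hS'Ncast, hmcast]
      linear_combination hmdef + (b:ℤ) * hSsucc
    exact_mod_cast h1
  -- conclusion 2
  have hconc2 : c = b * ((B ^ (k' + 1) - B) / (B - 1)) + c % B := by
    have hdivc : (B ^ (k' + 1) - B) / (B - 1) = B * S'N := by
      refine Nat.div_eq_of_eq_mul_left (by omega) ?_
      have hBle : B ≤ B ^ (k' + 1) := Nat.le_self_pow (by omega) B
      have : ((B ^ (k' + 1) - B : ℕ) : ℤ) = ((B * S'N * (B - 1) : ℕ) : ℤ) := by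
        push_cast [Nat.cast_sub hBle, Nat.cast_sub hB1, hS'Ncast]
        linear_combination (-(B : ℤ)) * hS'
      exact_mod_cast this
    have hcmod : c % B = b - mN := by
      rw [hcid, Nat.mul_add_mod]
      exact Nat.mod_eq_of_lt (by omega)
    rw [hdivc, hcmod, hcid]
    ring
  -- natural versions of A and E
  obtain ⟨An, hAndef⟩ : ∃ x : ℕ, x = a * (B - 1) + b := ⟨_, rfl⟩
  obtain ⟨En, hEndef⟩ : ∃ x : ℕ, x = b + mN * (B - 1) := ⟨_, rfl⟩
  have hAncast : (An : ℤ) = A := by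
    rw [hAndef, hAdef]; push_cast [Nat.cast_sub hB1]; ring
  have hEncast : (En : ℤ) = E := by
    rw [hEndef, hEm]; push_cast [Nat.cast_sub hB1, hmcast]; ring
  have hAEn : An * En = b ^ 2 * B ^ (k' + 1) := by
    have : ((An * En : ℕ) : ℤ) = ((b ^ 2 * B ^ (k' + 1) : ℕ) : ℤ) := by
      push_cast [hAncast, hEncast]; exact_mod_cast hAE
    exact_mod_cast this
  have hAn0 : An ≠ 0 := by rw [hAndef]; positivity
  have hEn0 : En ≠ 0 := by rw [hEndef]; positivity
  -- B does not divide En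
  have hEnB : ¬ (p ^ n ∣ En) := by
    intro hdvd
    rw [← hB] at hdvd
    have hEn2 : En = mN * B + (b - mN) := by
      have : ((En : ℕ) : ℤ) = ((mN * B + (b - mN) : ℕ) : ℤ) := by
        push_cast [Nat.cast_sub (show mN ≤ b by omega), hEncast, hEm, hmcast]
        ring
      exact_mod_cast this
    have h1 : En % B = b - mN := by
      rw [hEn2, Nat.mul_add_mod']
      exact Nat.mod_eq_of_lt (by omega)
    have h2 : En % B = 0 := Nat.mod_eq_zero_of_dvd hdvd
    omega
  -- p-adic valuation bookkeeping
  have hfe : En.factorization p < n := by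
    by_contra hh
    push_neg at hh
    exact hEnB (dvd_trans (pow_dvd_pow p hh) (Nat.ordProj_dvd En p))
  have hsum : An.factorization p + En.factorization p
      = 2 * b.factorization p + (k' + 1) * n := by
    have h1 : (An * En).factorization p = (b ^ 2 * B ^ (k' + 1)).factorization p := by
      rw [hAEn]
    rw [Nat.factorization_mul hAn0 hEn0,
      Nat.factorization_mul (by positivity) (show B ^ (k' + 1) ≠ 0 by positivity),
      Nat.factorization_pow, Nat.factorization_pow] at h1
    simp only [Finsupp.add_apply, Finsupp.smul_apply, smul_eq_mul] at h1
    have hBfac : B.factorization p = n := by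
      rw [hB, hp.factorization_pow]
      simp
    rw [hBfac] at h1
    exact h1
  have key : p ^ (n * k') ∣ An := by
    refine dvd_trans (pow_dvd_pow p ?_) (Nat.ordProj_dvd An p)
    have h2 : (k' + 1) * n = n * k' + n := by ring
    rw [h2] at hsum
    linarith [hsum, hfe, Nat.zero_le (2 * b.factorization p)]
  have hdvdAn : B ^ k' ∣ An := by rw [hB, ← pow_mul]; exact key
  -- transfer divisibility to a - b * S'
  have hdvdZ : ((B : ℤ)) ^ k' ∣ (a : ℤ) - b * S' := by
    have h1 : ((a : ℤ) - b * S') * ((B : ℤ) - 1) = (An : ℤ) - b * (B : ℤ) ^ k' := by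
      rw [hAncast, hAdef]; linear_combination (-(b : ℤ)) * hS'
    have h2 : ((B : ℤ)) ^ k' ∣ (An : ℤ) - b * (B : ℤ) ^ k' := by
      refine dvd_sub ?_ ⟨b, by ring⟩
      have := Int.natCast_dvd_natCast.mpr hdvdAn
      push_cast at this
      exact this
    have hcop : IsCoprime ((B : ℤ) ^ k') ((B : ℤ) - 1) :=
      (show IsCoprime (B : ℤ) ((B : ℤ) - 1) from ⟨1, -1, by ring⟩).pow_left
    exact hcop.dvd_of_dvd_mul_right (h1 ▸ h2)
  have h0 : b * S'N ≤ a := le_trans (le_of_lt hbS'N) ha₁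
  have hdvdN : B ^ k' ∣ a - b * S'N := by
    have h1 : ((a - b * S'N : ℕ) : ℤ) = (a : ℤ) - b * S' := by
      push_cast [Nat.cast_sub h0, hS'Ncast]; ring
    have h2 := hdvdZ
    rw [← h1] at h2
    exact_mod_cast h2
  have hamod : a % B ^ k' = b * S'N := by
    have h2 : b * S'N % B ^ k' = a % B ^ k' := (Nat.modEq_iff_dvd' h0).mpr hdvdN
    rw [← h2]
    exact Nat.mod_eq_of_lt hbS'N
  constructor
  · have hdiv1 : (B ^ k' - 1) / (B - 1) = S'N :=
      Nat.div_eq_of_eq_mul_left (by omega) (by rw [← hS'N]; ring)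
    rw [hdiv1, ← hamod]
    exact (Nat.div_add_mod' a (B ^ k')).symm
  · exact hconc2
end

section
/- Let B ≥ 2 be an integer base, k ≥ 1, let I = (B^k − 1)/(B − 1), and let (a, b, c) be a digit-block triple with property P_k and with a, b, c > 0. If a = c, or a = b·I, or c = b·I, then a = c = b·I; that is, all base-B digits of the represented number are equal to b. -/
/-- If a positive solution of `P_k` satisfies `a = c`, or `a = b·I`, or
`c = b·I`, where `I = (B^k − 1)/(B − 1)` is the repunit block, then
`a = c = b·I`, i.e. all digits are equal and the solution is trivial. -/
theorem stmt_10 (B k a b c : ℕ) (hB : 2 ≤ B) (hk : 1 ≤ k)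
    (ha₁ : B ^ (k - 1) ≤ a) (ha₂ : a < B ^ k) (hb : b < B) (hc : c < B ^ k)
    (hP : (a * B + b) * c = a * (b * B ^ k + c))
    (ha0 : 0 < a) (hb0 : 0 < b) (hc0 : 0 < c)
    (h : a = c ∨ a = b * ((B ^ k - 1) / (B - 1)) ∨
         c = b * ((B ^ k - 1) / (B - 1))) :
    a = b * ((B ^ k - 1) / (B - 1)) ∧ c = b * ((B ^ k - 1) / (B - 1)) := by
  set I := (B ^ k - 1) / (B - 1) with hIdef
  set D := B - 1 with hDdef
  have hBD : B = D + 1 := by omega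
  have hD0 : 0 < D := by omega
  have hdvd : (B - 1) ∣ (B ^ k - 1) := by
    simpa using Nat.sub_dvd_pow_sub_pow B 1 k
  have hIm : I * D = B ^ k - 1 := Nat.div_mul_cancel hdvd
  have hBk1 : 1 ≤ B ^ k := Nat.one_le_pow _ _ (by omega)
  have hBk : B ^ k = I * D + 1 := by omega
  rcases h with h | h | h
  · -- a = c
    subst h
    have e1 : a * B + b = b * B ^ k + a :=
      Nat.eq_of_mul_eq_mul_right ha0 (by rw [hP]; ring)
    have e2 : a * D + (a + b) = b * I * D + (a + b) := by
      calc a * D + (a + b) = a * B + b := by rw [hBD]; ring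
        _ = b * B ^ k + a := e1
        _ = b * I * D + (a + b) := by rw [hBk]; ring
    have e3 : a * D = b * I * D := Nat.add_right_cancel e2
    have := Nat.eq_of_mul_eq_mul_right hD0 e3
    exact ⟨this, this⟩
  · -- a = b * I
    subst h
    have e0 : b * ((I * B + 1) * c) = b * (I * (b * B ^ k + c)) := by
      calc b * ((I * B + 1) * c) = (b * I * B + b) * c := by ring
        _ = b * I * (b * B ^ k + c) := hP
        _ = b * (I * (b * B ^ k + c)) := by ring
    have e1 : (I * B + 1) * c = I * (b * B ^ k + c) :=
      Nat.eq_of_mul_eq_mul_left hb0 e0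
    have e2 : I * c + B ^ k * c = I * c + B ^ k * (b * I) := by
      calc I * c + B ^ k * c = (I * B + 1) * c := by rw [hBk, hBD]; ring
        _ = I * (b * B ^ k + c) := e1
        _ = I * c + B ^ k * (b * I) := by ring
    have e3 := Nat.eq_of_mul_eq_mul_left (show 0 < B ^ k by omega)
      (Nat.add_left_cancel e2)
    exact ⟨rfl, e3⟩
  · -- c = b * I
    subst h
    have e0 : b * ((a * B + b) * I) = b * (a * (B ^ k + I)) := by
      calc b * ((a * B + b) * I) = (a * B + b) * (b * I) := by ring
        _ = a * (b * B ^ k + b * I) := hP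
        _ = b * (a * (B ^ k + I)) := by ring
    have e1 : (a * B + b) * I = a * (B ^ k + I) :=
      Nat.eq_of_mul_eq_mul_left hb0 e0
    have e2 : a * I * D + a * I + b * I = a * I * D + a * I + a := by
      calc a * I * D + a * I + b * I = (a * B + b) * I := by rw [hBD]; ring
        _ = a * (B ^ k + I) := e1
        _ = a * I * D + a * I + a := by rw [hBk]; ring
    have e3 : b * I = a := Nat.add_left_cancel e2
    exact ⟨e3.symm, rfl⟩
end

section
/- Let B ≥ 2 be an integer base and ℓ, k ≥ 1. If (a, b, c) is a digit-block triple with property P*_{ℓ;k}, then ℓ ≤ k; equivalently, there are no nontrivial solutions of P_{ℓ;k} when the leading block a has strictly more digits than the trailing block c. -/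
/-- There are no nontrivial solutions of `P_{ℓ;k}` with `ℓ > k`. -/
theorem stmt_12 (B ℓ k a b c : ℕ) (hB : 2 ≤ B) (hℓ : 1 ≤ ℓ) (hk : 1 ≤ k)
    (ha₁ : B ^ (ℓ - 1) ≤ a) (ha₂ : a < B ^ ℓ) (hb : b < B) (hc : c < B ^ k)
    (hP : (a * B + b) * c = a * (b * B ^ k + c))
    (hz : ¬(a = 0 ∧ b = 0) ∧ ¬(a = 0 ∧ c = 0) ∧ ¬(b = 0 ∧ c = 0))
    (hne : ¬(a = b * ((B ^ ℓ - 1) / (B - 1)) ∧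
             c = b * ((B ^ k - 1) / (B - 1)))) :
    ℓ ≤ k := by
  by_contra hlk
  push_neg at hlk
  have ha0 : 1 ≤ a := le_trans (Nat.one_le_pow _ _ (by omega)) ha₁
  have hb0 : 1 ≤ b := by
    rcases Nat.eq_zero_or_pos b with h | h
    · subst h
      simp only [Nat.zero_mul, Nat.add_zero, Nat.mul_zero] at hP
      -- hP : a * B * c = a * c
      have hc0 : c = 0 := by
        by_contra h
        have h1 : 0 < a * c := Nat.mul_pos ha0 (Nat.pos_of_ne_zero h)
        nlinarith [h1]
      exact absurd ⟨rfl, hc0⟩ hz.2.2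
    · exact h
  have hc0 : 1 ≤ c := by
    rcases Nat.eq_zero_or_pos c with h | h
    · subst h
      simp only [Nat.mul_zero, Nat.add_zero] at hP
      have hb0' : b = 0 := by
        by_contra h
        have := Nat.mul_pos ha0 (Nat.mul_pos (Nat.pos_of_ne_zero h)
          (pow_pos (show 0 < B by omega) k))
        exact absurd hP.symm (Nat.ne_of_gt this)
      exact absurd ⟨hb0'.symm ▸ rfl, rfl⟩ hz.2.2
    · exact h
  have hak : B ^ k ≤ a := le_trans (Nat.pow_le_pow_right (by omega) (by omega)) ha₁
  have hca : c < a := lt_of_lt_of_le hc hak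
  -- a divides b * c
  have hdvd : a ∣ b * c := by
    have h := congrArg (fun x : ℕ => (x : ℤ)) hP
    push_cast at h
    have : (b : ℤ) * c = a * ((b : ℤ) * B ^ k + c - B * c) := by linear_combination h
    have : (a : ℤ) ∣ (b : ℤ) * c := ⟨_, this⟩
    exact_mod_cast this
  obtain ⟨m, hm⟩ := hdvd
  have hm1 : 1 ≤ m := by
    rcases Nat.eq_zero_or_pos m with h | h
    · exfalso; rw [h, Nat.mul_zero] at hm
      exact absurd hm (Nat.ne_of_gt (Nat.mul_pos hb0 hc0))
    · exact h
  have hmb : m < b := by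
    have : a * m < b * a := hm ▸ mul_lt_mul_of_pos_left hca (by omega : 0 < b)
    have : a * m < a * b := by linarith [this]
    exact lt_of_mul_lt_mul_left this (Nat.zero_le a)
  -- key: (B - 1 : ℤ) ∣ (b - m)
  have hP' := congrArg (fun x : ℕ => (x : ℤ)) hP
  have hm' := congrArg (fun x : ℕ => (x : ℤ)) hm
  push_cast at hP' hm'
  have hkey : (B : ℤ) * c + m = b * B ^ k + c := by
    have ha0' : (0 : ℤ) < a := by exact_mod_cast ha0
    have : (a : ℤ) * (B * c + m) = a * (b * B ^ k + c) := by linear_combination hP' - hm'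
    have := mul_left_cancel₀ (ne_of_gt ha0') this
    linarith [this]
  have hdvd2 : ((B : ℤ) - 1) ∣ ((b : ℤ) - m) := by
    have h1 : ((B : ℤ) - 1) ∣ ((B : ℤ) ^ k - 1) := by
      simpa using sub_dvd_pow_sub_pow (B : ℤ) 1 k
    obtain ⟨t, ht⟩ := h1
    refine ⟨(c : ℤ) - b * t, ?_⟩
    have : (m : ℤ) = b * B ^ k + c - B * c := by linarith [hkey]
    rw [this]
    have : (b : ℤ) * B ^ k = b * ((B - 1) * t) + b := by rw [← ht]; ring
    rw [this]; ring
  -- but 0 < b - m < B - 1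
  have hpos : (0 : ℤ) < (b : ℤ) - m := by
    have : (m : ℤ) < b := by exact_mod_cast hmb
    linarith
  have hle := Int.le_of_dvd hpos hdvd2
  have hbB : (b : ℤ) < B := by exact_mod_cast hb
  have hm1' : (1 : ℤ) ≤ m := by exact_mod_cast hm1
  linarith
end

section
/- Let B ≥ 2 be an integer base and k ≥ 1. If (a, b, c) is a digit-block triple with property P*_k, then B does not divide c; that is, the last base-B digit c_k = c mod B is nonzero. -/
/-- The last base-`B` digit of `c` in a nontrivial solution of `P*_k` is
nonzero. -/
theorem stmt_13 (B k a b c : ℕ) (hB : 2 ≤ B) (hk : 1 ≤ k)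
    (ha₁ : B ^ (k - 1) ≤ a) (ha₂ : a < B ^ k) (hb : b < B) (hc : c < B ^ k)
    (hP : (a * B + b) * c = a * (b * B ^ k + c))
    (hz : ¬(a = 0 ∧ b = 0) ∧ ¬(a = 0 ∧ c = 0) ∧ ¬(b = 0 ∧ c = 0))
    (hne : ¬(a = b * ((B ^ k - 1) / (B - 1)) ∧ c = b * ((B ^ k - 1) / (B - 1)))) :
    ¬ B ∣ c := by
  intro hdvd
  obtain ⟨d, hd⟩ := hdvd
  have hBk : B ^ k = B * B ^ (k - 1) := by
    conv_lhs => rw [show k = (k - 1) + 1 by omega]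
    ring
  have ha0 : 1 ≤ a := le_trans (Nat.one_le_pow _ _ (by omega)) ha₁
  -- b ≥ 1
  have hb0 : 1 ≤ b := by
    rcases Nat.eq_zero_or_pos b with h0 | h; swap; · exact h
    subst h0
    have h1 : a * (B * c) = a * c := by
      have := hP; ring_nf at this ⊢; linarith
    have h2 : B * c = c := Nat.eq_of_mul_eq_mul_left (by omega) h1
    have hc0 : c = 0 := by nlinarith
    exact absurd ⟨rfl, hc0⟩ hz.2.2
  -- c ≥ 1
  have hc0 : 1 ≤ c := by
    rcases Nat.eq_zero_or_pos c with h0 | h; swap; · exact h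
    rw [h0] at hP
    simp at hP
    rcases hP with h | h | h
    · omega
    · exact absurd ⟨h, h0⟩ hz.2.2
    · omega
  have hd1 : 1 ≤ d := by
    rcases Nat.eq_zero_or_pos d with h0 | h
    · subst h0; simp at hd; omega
    · exact h
  have hdlt : d < B ^ (k - 1) := by
    have h1 : B * d < B * B ^ (k - 1) := by rw [← hBk, ← hd]; exact hc
    exact Nat.lt_of_mul_lt_mul_left h1
  -- cancel B in hP
  have key : (a * B + b) * d = a * (b * B ^ (k - 1) + d) := by
    apply Nat.eq_of_mul_eq_mul_left (show 0 < B by omega)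
    have := hP
    rw [hd, hBk] at this
    ring_nf at this ⊢
    linarith
  -- move to integers
  have keyZ : ((a : ℤ) * B + b) * d = (a : ℤ) * (b * B ^ (k - 1) + d) := by
    exact_mod_cast key
  have hdaZ : (d : ℤ) < (a : ℤ) := by
    exact_mod_cast lt_of_lt_of_le hdlt ha₁
  have hb0Z : (1 : ℤ) ≤ (b : ℤ) := by exact_mod_cast hb0
  have hd1Z : (1 : ℤ) ≤ (d : ℤ) := by exact_mod_cast hd1
  have ha0Z : (1 : ℤ) ≤ (a : ℤ) := by exact_mod_cast ha0
  have hBZ : (2 : ℤ) ≤ (B : ℤ) := by exact_mod_cast hB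
  have haM : (a : ℤ) * ((b : ℤ) * (B : ℤ) ^ (k - 1) - (d : ℤ) * ((B : ℤ) - 1))
      = (d : ℤ) * (b : ℤ) := by linear_combination -1 * keyZ
  set M : ℤ := (b : ℤ) * (B : ℤ) ^ (k - 1) - (d : ℤ) * ((B : ℤ) - 1) with hM
  have hMpos : 0 < M := by
    by_contra hneg
    push_neg at hneg
    have h1 : (a : ℤ) * M ≤ 0 := mul_nonpos_of_nonneg_of_nonpos (by linarith) hneg
    have h2 : (0 : ℤ) < (d : ℤ) * (b : ℤ) := by positivity
    omega
  have hMlt : M < (b : ℤ) := by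
    have h1 : (a : ℤ) * M < (a : ℤ) * (b : ℤ) := by
      rw [haM]
      exact mul_lt_mul_of_pos_right hdaZ (by linarith)
    exact lt_of_mul_lt_mul_left h1 (by linarith)
  have hdvd1 : ((B : ℤ) - 1) ∣ (B : ℤ) ^ (k - 1) - 1 := by
    simpa using sub_dvd_pow_sub_pow (B : ℤ) 1 (k - 1)
  have hdvd2 : ((B : ℤ) - 1) ∣ ((b : ℤ) - M) := by
    have h1 : (b : ℤ) - M = (d : ℤ) * ((B : ℤ) - 1)
        - (b : ℤ) * ((B : ℤ) ^ (k - 1) - 1) := by rw [hM]; ring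
    rw [h1]
    exact dvd_sub (dvd_mul_left _ _) (Dvd.dvd.mul_left hdvd1 b)
  have hlb : (B : ℤ) - 1 ≤ (b : ℤ) - M := Int.le_of_dvd (by linarith) hdvd2
  have hbB : (b : ℤ) ≤ (B : ℤ) - 1 := by
    have : (b : ℤ) < (B : ℤ) := by exact_mod_cast hb
    linarith
  linarith
end

section
/- Let B ≥ 2 be an integer base, ℓ, k ≥ 1, and let (a, b, c) be a digit-block triple with property P*_{ℓ;k}. Then a divides b·c, and the integer d = b·c/a satisfies d ≥ B. -/
/-!
Property `P` is equivalent to `b·c = a·d` with `d = b·B^k − (B−1)·c`, so `a ∣ b·c` with quotient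
`d`, which is positive once `b, c > 0`. Since `B ≡ 1 (mod B−1)`, also `d ≡ b (mod B−1)`. If `d < B`,
then `d` and `b` both lie in `[1, B−1]`, forcing `d = b`; then `a = c`, `(B−1)·c = b·(B^k−1)`, and
comparing digit lengths gives `ℓ = k`, so `N` is a repdigit.
-/

theorem Int.eq_of_modEq_of_mem_Icc {m x y : ℤ} (h : x ≡ y [ZMOD m])
    (hx : x ∈ Set.Icc 1 m) (hy : y ∈ Set.Icc 1 m) : x = y := by
  have := Int.eq_zero_of_abs_lt_dvd h.dvd (abs_sub_lt_iff.mpr ⟨by grind, by grind⟩)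
  omega

theorem Int.mul_pow_sub_sub_one_mul_modEq (B b c : ℤ) (k : ℕ) :
    b * B ^ k - (B - 1) * c ≡ b [ZMOD B - 1] := by
  have hB : B ≡ 1 [ZMOD B - 1] := Int.modEq_sub B 1
  have h0 : B - 1 ≡ 0 [ZMOD B - 1] := by simp [Int.ModEq]
  simpa using ((Int.ModEq.refl b).mul (hB.pow k)).sub (h0.mul_right c)

theorem Nat.pow_pred_le_pow_sub_one_div_sub_one {B k : ℕ} (hB : 2 ≤ B) (hk : 1 ≤ k) :
    B ^ (k - 1) ≤ (B ^ k - 1) / (B - 1) := by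
  rw [← Nat.geomSum_eq hB]
  exact Finset.single_le_sum (fun _ _ ↦ Nat.zero_le _) (Finset.mem_range.mpr (by omega))

theorem Nat.eq_mul_pow_sub_one_div_sub_one {B k b c : ℕ} (hB : 2 ≤ B)
    (h : (B - 1) * c = b * (B ^ k - 1)) : c = b * ((B ^ k - 1) / (B - 1)) := by
  rw [← Nat.mul_div_assoc _ (Nat.sub_one_dvd_pow_sub_one B k), ← h,
    Nat.mul_div_cancel_left _ (by omega)]

theorem Nat.eq_of_mem_Ico_pow_pred {B ℓ k n : ℕ} (hB : 2 ≤ B)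
    (hℓ : n ∈ Set.Ico (B ^ (ℓ - 1)) (B ^ ℓ)) (hk : n ∈ Set.Ico (B ^ (k - 1)) (B ^ k)) : ℓ = k := by
  have h₁ := (Nat.pow_lt_pow_iff_right hB).mp (hℓ.1.trans_lt hk.2)
  have h₂ := (Nat.pow_lt_pow_iff_right hB).mp (hk.1.trans_lt hℓ.2)
  omega

section DigitBlock

variable {B ℓ k a b c : ℕ}

theorem mul_quotient_eq_of_P (hP : (a * B + b) * c = a * (b * B ^ k + c)) :
    (a : ℤ) * (b * B ^ k - (B - 1) * c) = b * c := by
  have hP' : ((a : ℤ) * B + b) * c = a * (b * B ^ k + c) := by exact_mod_cast hP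
  linear_combination -hP'

theorem pos_and_pos_of_P (hB : 2 ≤ B) (ha : 0 < a) (hP : (a * B + b) * c = a * (b * B ^ k + c))
    (hbc : ¬(b = 0 ∧ c = 0)) : 0 < b ∧ 0 < c := by
  have hd := mul_quotient_eq_of_P hP
  have hBk : (0 : ℤ) < (B : ℤ) ^ k := by positivity
  have hB' : (2 : ℤ) ≤ B := by exact_mod_cast hB
  constructor <;> by_contra! h0 <;> obtain rfl : _ = 0 := Nat.le_zero.mp h0
  · refine hbc ⟨rfl, ?_⟩
    have : (a : ℤ) * ((B - 1) * c) = 0 := by simpa using hd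
    simpa [ha.ne', show (B : ℤ) - 1 ≠ 0 by omega] using this
  · refine hbc ⟨?_, rfl⟩
    simpa [ha.ne', hBk.ne'] using hd

theorem repdigit_of_quotient_eq (hB : 2 ≤ B) (ha₁ : B ^ (ℓ - 1) ≤ a) (ha₂ : a < B ^ ℓ)
    (hc : c < B ^ k) (hb : 0 < b) (hc₀ : 0 < c)
    (hd : (a : ℤ) * (b * B ^ k - (B - 1) * c) = b * c)
    (hdb : (b : ℤ) * B ^ k - (B - 1) * c = b) :
    a = b * ((B ^ ℓ - 1) / (B - 1)) ∧ c = b * ((B ^ k - 1) / (B - 1)) := by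
  have hac : a = c := by
    rw [hdb, mul_comm] at hd
    exact_mod_cast mul_left_cancel₀ (by exact_mod_cast hb.ne') hd
  have hrep : (B - 1) * c = b * (B ^ k - 1) := by
    have : 1 ≤ B ^ k := Nat.one_le_pow _ _ (by omega)
    zify [this, show 1 ≤ B by omega]
    linear_combination -hdb
  have hcR := Nat.eq_mul_pow_sub_one_div_sub_one hB hrep
  have hk : 1 ≤ k := by
    by_contra! h
    simp [Nat.lt_one_iff.mp h] at hcR
    omega
  have hc₁ : B ^ (k - 1) ≤ c :=
    (Nat.pow_pred_le_pow_sub_one_div_sub_one hB hk).trans (hcR ▸ Nat.le_mul_of_pos_left _ hb)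
  obtain rfl : ℓ = k := Nat.eq_of_mem_Ico_pow_pred hB ⟨ha₁, ha₂⟩ (hac ▸ ⟨hc₁, hc⟩)
  exact ⟨hac.trans hcR, hcR⟩

end DigitBlock

theorem stmt_14_general (B ℓ k a b c : ℕ) (hB : 2 ≤ B)
    (ha₁ : B ^ (ℓ - 1) ≤ a) (ha₂ : a < B ^ ℓ) (hb : b < B) (hc : c < B ^ k)
    (hP : (a * B + b) * c = a * (b * B ^ k + c))
    (hz : ¬(a = 0 ∧ b = 0) ∧ ¬(a = 0 ∧ c = 0) ∧ ¬(b = 0 ∧ c = 0))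
    (hne : ¬(a = b * ((B ^ ℓ - 1) / (B - 1)) ∧
             c = b * ((B ^ k - 1) / (B - 1)))) :
    a ∣ b * c ∧ B ≤ b * c / a := by
  have ha : 0 < a := (Nat.pow_pos (by omega)).trans_le ha₁
  obtain ⟨hb₀, hc₀⟩ := pos_and_pos_of_P hB ha hP hz.2.2
  set d : ℤ := b * B ^ k - (B - 1) * c
  have hd : (a : ℤ) * d = b * c := mul_quotient_eq_of_P hP
  have hd₀ : 0 < d := pos_of_mul_pos_right (by rw [hd]; positivity) (by positivity)
  have hquot : ((b * c / a : ℕ) : ℤ) = d := by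
    push_cast [Int.natCast_div, ← hd]
    exact Int.mul_ediv_cancel_left _ (by exact_mod_cast ha.ne')
  refine ⟨Int.natCast_dvd_natCast.mp ⟨d, by push_cast; exact hd.symm⟩, ?_⟩
  by_contra! hlt
  have hdB : d < B := by rw [← hquot]; exact_mod_cast hlt
  have hdb : d = b := Int.eq_of_modEq_of_mem_Icc (Int.mul_pow_sub_sub_one_mul_modEq _ _ _ _)
    ⟨hd₀, by omega⟩ ⟨by exact_mod_cast hb₀, by omega⟩
  exact hne (repdigit_of_quotient_eq hB ha₁ ha₂ hc hb₀ hc₀ hd hdb)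

/-- For a nontrivial solution of `P*_{ℓ;k}`, the ratio `d = b·c/a` is an
integer and satisfies `d ≥ B`. -/
theorem stmt_14 (B ℓ k a b c : ℕ) (hB : 2 ≤ B) (hℓ : 1 ≤ ℓ) (hk : 1 ≤ k)
    (ha₁ : B ^ (ℓ - 1) ≤ a) (ha₂ : a < B ^ ℓ) (hb : b < B) (hc : c < B ^ k)
    (hP : (a * B + b) * c = a * (b * B ^ k + c))
    (hz : ¬(a = 0 ∧ b = 0) ∧ ¬(a = 0 ∧ c = 0) ∧ ¬(b = 0 ∧ c = 0))
    (hne : ¬(a = b * ((B ^ ℓ - 1) / (B - 1)) ∧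
             c = b * ((B ^ k - 1) / (B - 1)))) :
    a ∣ b * c ∧ B ≤ b * c / a :=
  stmt_14_general B ℓ k a b c hB ha₁ ha₂ hb hc hP hz hne
end

section
/- Let B ≥ 2 be an integer base and k ≥ 1. If (a, b, c) is a digit-block triple with property P*_k, then 2a < B^k; consequently the leading base-B digit a₁ of a satisfies 2·a₁ < B. -/
/-!
Write `q = B - 1` and `B ^ k = q R + 1`, so that `R = (B ^ k - 1) / (B - 1)` is the repunit and the
trivial solution is `a = c = b R`. Property `P_k` reads `c (a q + b) = a b B ^ k`, which rearranges to
`(a q + b) (b + q m) = b² B ^ k` with `m = b R - c`. Positivity forces `m ≥ 0`, and `m = 0` is the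
trivial solution. If `m ≥ 1` and `2 a ≥ B ^ k`, then `2 (a q + b) ≥ q B ^ k + 2 b` and `b + q m ≥ b + q`,
and since `q (b + q) ≥ 2 b²` for `b ≤ q` the left-hand side overshoots `2 b² B ^ k`.
-/

theorem eq_mul_and_eq_mul_of_le_two_mul {q R a b c : ℕ} (hb : 0 < b) (hbq : b ≤ q)
    (hP : (a * (q + 1) + b) * c = a * (b * (q * R + 1) + c)) (hbig : q * R + 1 ≤ 2 * a) :
    a = b * R ∧ c = b * R := by
  zify at hb hbq hP hbig ⊢
  set m : ℤ := b * R - c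
  have hD : (0 : ℤ) < a * q + b := by positivity
  have hDE : ((a : ℤ) * q + b) * (b + q * m) = b ^ 2 * (q * R + 1) := by
    linear_combination (-(q : ℤ)) * hP
  have hm : 0 ≤ m := by
    by_contra! hm
    have hE : (b : ℤ) + q * m ≤ 0 := by nlinarith
    nlinarith [mul_nonpos_of_nonneg_of_nonpos hD.le hE]
  rcases hm.eq_or_lt with hm0 | hm1
  · have hc : (c : ℤ) = b * R := by linarith
    have hDb : (a : ℤ) * q + b = b * (q * R + 1) := by
      rw [← hm0, mul_zero, add_zero] at hDE
      exact mul_right_cancel₀ hb.ne' (by linear_combination hDE)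
    have ha : (a : ℤ) * q = b * R * q := by linear_combination hDb
    exact ⟨mul_right_cancel₀ (by omega) ha, hc⟩
  · exfalso
    have hE : (b : ℤ) + q ≤ b + q * m := by nlinarith
    have hD2 : (q : ℤ) * (q * R + 1) + 2 * b ≤ 2 * (a * q + b) := by nlinarith
    have hsq : 2 * (b : ℤ) ^ 2 ≤ q * (b + q) := by nlinarith
    nlinarith [mul_le_mul hD2 hE (by positivity) (by positivity),
      mul_le_mul_of_nonneg_left hsq (by positivity : (0 : ℤ) ≤ q * R + 1)]

theorem pow_eq_sub_one_mul_repunit_add_one {B : ℕ} (hB : 0 < B) (k : ℕ) :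
    B ^ k = (B - 1) * ((B ^ k - 1) / (B - 1)) + 1 := by
  have hdvd : B - 1 ∣ B ^ k - 1 := by simpa using Nat.sub_dvd_pow_sub_pow B 1 k
  rw [Nat.mul_div_cancel' hdvd, Nat.sub_add_cancel (Nat.one_le_pow _ _ hB)]

theorem two_mul_div_pow_pred_lt {B k a : ℕ} (hk : 1 ≤ k) (h : 2 * a < B ^ k) :
    2 * (a / B ^ (k - 1)) < B := by
  have h' : 2 * a < B ^ (k - 1) * B := by rwa [← pow_succ, Nat.sub_add_cancel hk]
  exact (Nat.mul_div_le_mul_div_assoc 2 a _).trans_lt (Nat.div_lt_of_lt_mul h')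

theorem stmt_15_general (B k a b c : ℕ) (hB : 2 ≤ B) (hk : 1 ≤ k)
    (hb : b < B)
    (hP : (a * B + b) * c = a * (b * B ^ k + c))
    (hz : ¬(a = 0 ∧ b = 0) ∧ ¬(a = 0 ∧ c = 0) ∧ ¬(b = 0 ∧ c = 0))
    (hne : ¬(a = b * ((B ^ k - 1) / (B - 1)) ∧ c = b * ((B ^ k - 1) / (B - 1)))) :
    2 * a < B ^ k ∧ 2 * (a / B ^ (k - 1)) < B := by
  have hb0 : 0 < b := by
    refine Nat.pos_of_ne_zero fun hb0 => ?_
    subst hb0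
    have hac : a * c * (B - 1) = 0 := by
      rw [Nat.mul_sub_one, Nat.sub_eq_zero_iff_le]; nlinarith
    rcases Nat.mul_eq_zero.mp hac with hac | hB1
    · rcases Nat.mul_eq_zero.mp hac with ha | hc
      exacts [hz.1 ⟨ha, rfl⟩, hz.2.2 ⟨rfl, hc⟩]
    · omega
  have hBk := pow_eq_sub_one_mul_repunit_add_one (by omega : 0 < B) k
  have h2a : 2 * a < B ^ k := by
    by_contra! hbig
    rw [hBk] at hbig
    refine hne (eq_mul_and_eq_mul_of_le_two_mul hb0 (by omega) ?_ hbig)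
    rwa [Nat.sub_add_cancel (by omega : 1 ≤ B), ← hBk]
  exact ⟨h2a, two_mul_div_pow_pred_lt hk h2a⟩

/-- For a nontrivial solution of `P*_k`, the leading block satisfies
`2a < B^k`, and consequently the leading digit `a₁ = a / B^{k−1}` satisfies
`2·a₁ < B`. -/
theorem stmt_15 (B k a b c : ℕ) (hB : 2 ≤ B) (hk : 1 ≤ k)
    (ha₁ : B ^ (k - 1) ≤ a) (ha₂ : a < B ^ k) (hb : b < B) (hc : c < B ^ k)
    (hP : (a * B + b) * c = a * (b * B ^ k + c))
    (hz : ¬(a = 0 ∧ b = 0) ∧ ¬(a = 0 ∧ c = 0) ∧ ¬(b = 0 ∧ c = 0))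
    (hne : ¬(a = b * ((B ^ k - 1) / (B - 1)) ∧ c = b * ((B ^ k - 1) / (B - 1)))) :
    2 * a < B ^ k ∧ 2 * (a / B ^ (k - 1)) < B :=
  stmt_15_general B k a b c hB hk hb hP hz hne
end

section
/- Let B ≥ 2 be an integer base and k ≥ 1. If (a, b, c) is a digit-block triple with property P*_k, then c = b·M + c_k where M = (B^k − B)/(B − 1) and c_k = c mod B, and moreover c_k < b; that is, all base-B digits of c except the last equal b, and the last digit is strictly smaller than b. -/
set_option maxHeartbeats 1000000


/-- For a nontrivial solution of `P*_k`, all digits of `c` except the last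
equal `b`, and the last digit `c_k = c % B` satisfies `c_k < b`:
`c = b·M + c_k` where `M = (B^k − B)/(B − 1)`. -/
theorem stmt_16 (B k a b c : ℕ) (hB : 2 ≤ B) (hk : 1 ≤ k)
    (ha₁ : B ^ (k - 1) ≤ a) (ha₂ : a < B ^ k) (hb : b < B) (hc : c < B ^ k)
    (hP : (a * B + b) * c = a * (b * B ^ k + c))
    (hz : ¬(a = 0 ∧ b = 0) ∧ ¬(a = 0 ∧ c = 0) ∧ ¬(b = 0 ∧ c = 0))
    (hne : ¬(a = b * ((B ^ k - 1) / (B - 1)) ∧ c = b * ((B ^ k - 1) / (B - 1)))) :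
    c = b * ((B ^ k - B) / (B - 1)) + c % B ∧ c % B < b := by
  obtain ⟨j, rfl⟩ : ∃ j, k = j + 1 := ⟨k - 1, by omega⟩
  simp only [Nat.add_sub_cancel] at ha₁
  have hB1 : 0 < B - 1 := by omega
  have hBj : 1 ≤ B ^ j := Nat.one_le_pow _ _ (by omega)
  have hBk : 1 ≤ B ^ (j + 1) := Nat.one_le_pow _ _ (by omega)
  have hBBk : B ≤ B ^ (j + 1) := Nat.le_self_pow (by omega) B
  have ha0 : 0 < a := lt_of_lt_of_le hBj ha₁
  set R : ℕ := (B ^ (j + 1) - 1) / (B - 1) with hRdef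
  set M : ℕ := (B ^ (j + 1) - B) / (B - 1) with hMdef
  have hdvR : (B - 1) ∣ B ^ (j + 1) - 1 := by
    simpa using Nat.sub_dvd_pow_sub_pow B 1 (j + 1)
  have hsub : B ^ (j + 1) - B = B * (B ^ j - 1) := by
    rw [Nat.mul_sub, mul_one, pow_succ, mul_comm]
  have hdvM : (B - 1) ∣ B ^ (j + 1) - B := by
    rw [hsub]
    exact Dvd.dvd.mul_left (by simpa using Nat.sub_dvd_pow_sub_pow B 1 j) B
  have hR : (B - 1) * R = B ^ (j + 1) - 1 := Nat.mul_div_cancel' hdvR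
  have hM : (B - 1) * M = B ^ (j + 1) - B := Nat.mul_div_cancel' hdvM
  have hMR : R = M + 1 := by
    have h : (B - 1) * R = (B - 1) * (M + 1) := by
      rw [hR, Nat.mul_add, hM, mul_one]; omega
    exact Nat.eq_of_mul_eq_mul_left hB1 h
  set R2 : ℕ := (B ^ j - 1) / (B - 1) with hR2def
  have hR2 : (B - 1) * R2 = B ^ j - 1 :=
    Nat.mul_div_cancel' (by simpa using Nat.sub_dvd_pow_sub_pow B 1 j)
  have hMB : M = B * R2 := by
    have h : (B - 1) * M = (B - 1) * (B * R2) := by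
      rw [hM, hsub, show (B - 1) * (B * R2) = B * ((B - 1) * R2) by ring, hR2]
    exact Nat.eq_of_mul_eq_mul_left hB1 h
  -- key equation over ℤ
  have hEz : (a : ℤ) * c * (B - 1) + b * c = a * b * B ^ (j + 1) := by
    have hP' : ((a : ℤ) * B + b) * c = a * (b * B ^ (j + 1) + c) := by exact_mod_cast hP
    linear_combination hP'
  have hRz : ((B : ℤ) - 1) * R = (B : ℤ) ^ (j + 1) - 1 := by
    have h := hR
    zify [show 1 ≤ B by omega, hBk] at h
    exact h
  have hMz : ((B : ℤ) - 1) * M = (B : ℤ) ^ (j + 1) - (B : ℤ) := by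
    have h := hM
    zify [show 1 ≤ B by omega, hBBk] at h
    exact h
  -- positivity of b and c
  have hb0 : 0 < b := by
    rcases Nat.eq_zero_or_pos b with rfl | h
    · exfalso
      simp only [Nat.add_zero, Nat.zero_mul, Nat.mul_zero, Nat.zero_add] at hP
      have hc0 : c = 0 := by
        rcases Nat.eq_zero_or_pos c with rfl | hcp
        · rfl
        · exfalso
          have h1 : 0 < a * c := Nat.mul_pos ha0 hcp
          have h2 : a * c * 2 ≤ a * c * B := Nat.mul_le_mul_left _ hB
          linarith [hP, h1, h2]
      exact hz.2.2 ⟨rfl, hc0⟩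
    · exact h
  have hc0 : 0 < c := by
    rcases Nat.eq_zero_or_pos c with rfl | h
    · exfalso
      have h0 : a * (b * B ^ (j + 1)) = 0 := by simpa using hP.symm
      have hb0' : b = 0 := by
        rcases Nat.mul_eq_zero.mp h0 with h | h
        · omega
        · rcases Nat.mul_eq_zero.mp h with h' | h'
          · exact h'
          · omega
      exact hz.2.2 ⟨hb0', rfl⟩
    · exact h
  have hbz : (1 : ℤ) ≤ (b : ℤ) := by exact_mod_cast hb0
  have hcz : (1 : ℤ) ≤ (c : ℤ) := by exact_mod_cast hc0
  have haz : (1 : ℤ) ≤ (a : ℤ) := by exact_mod_cast ha0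
  have hBz : (2 : ℤ) ≤ (B : ℤ) := by exact_mod_cast hB
  have hbBz : (b : ℤ) ≤ (B : ℤ) - 1 := by
    have : (b : ℤ) < (B : ℤ) := by exact_mod_cast hb
    linarith
  have hMz0 : (0 : ℤ) ≤ (M : ℤ) := by positivity
  have hRz0 : (0 : ℤ) ≤ (R : ℤ) := by positivity
  -- upper bound : c ≤ b * R
  have hcle : c ≤ b * R := by
    by_contra h
    push_neg at h
    have h1 : (b : ℤ) * R + 1 ≤ (c : ℤ) := by exact_mod_cast h
    have h2 : ((b : ℤ) * R + 1) * ((B : ℤ) - 1) ≤ (c : ℤ) * ((B : ℤ) - 1) :=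
      mul_le_mul_of_nonneg_right h1 (by linarith)
    have e : ((b : ℤ) * R + 1) * ((B : ℤ) - 1)
        = (b : ℤ) * (B : ℤ) ^ (j + 1) - b + ((B : ℤ) - 1) := by
      linear_combination (b : ℤ) * hRz
    have h3 : (b : ℤ) * (B : ℤ) ^ (j + 1) - b + ((B : ℤ) - 1) ≤ (c : ℤ) * ((B : ℤ) - 1) := by
      linarith [h2]
    have h4 : (a : ℤ) * ((b : ℤ) * (B : ℤ) ^ (j + 1) - b + ((B : ℤ) - 1))
        ≤ (a : ℤ) * ((c : ℤ) * ((B : ℤ) - 1)) :=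
      mul_le_mul_of_nonneg_left h3 (by linarith)
    have hab : (a : ℤ) * b ≤ (a : ℤ) * ((B : ℤ) - 1) :=
      mul_le_mul_of_nonneg_left hbBz (by linarith)
    have hbc1 : (1 : ℤ) ≤ (b : ℤ) * c := by
      have := mul_le_mul hbz hcz (by norm_num) (by linarith : (0:ℤ) ≤ (b:ℤ))
      linarith
    linarith [h4, hEz, hab, hbc1]
  have hcne : c ≠ b * R := by
    intro hceq
    have hcz2 : (c : ℤ) = (b : ℤ) * R := by exact_mod_cast hceq
    rw [hcz2] at hEz
    have h5 : (b : ℤ) * a = (b : ℤ) * ((b : ℤ) * R) := by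
      linear_combination (a : ℤ) * b * hRz - hEz
    have h6 : (a : ℤ) = (b : ℤ) * R := mul_left_cancel₀ (by linarith) h5
    exact hne ⟨by exact_mod_cast h6, hceq⟩
  have hclt : c < b * R := lt_of_le_of_ne hcle hcne
  -- lower bound : b * M ≤ c
  have hgel : b * M ≤ c := by
    by_contra h
    push_neg at h
    have h1 : (c : ℤ) + 1 ≤ (b : ℤ) * M := by exact_mod_cast h
    have haB : (b : ℤ) * M ≤ (a : ℤ) * B := by
      have t1 : (b : ℤ) * M ≤ ((B : ℤ) - 1) * M :=
        mul_le_mul_of_nonneg_right hbBz hMz0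
      have t2 : (B : ℤ) ^ (j + 1) ≤ (a : ℤ) * B := by
        have : (B : ℤ) ^ j ≤ (a : ℤ) := by exact_mod_cast ha₁
        have hB0 : (0 : ℤ) ≤ (B : ℤ) := by linarith
        calc (B : ℤ) ^ (j + 1) = (B : ℤ) ^ j * B := by ring
        _ ≤ (a : ℤ) * B := mul_le_mul_of_nonneg_right this hB0
      linarith [hMz]
    have p1 : (a : ℤ) * ((c : ℤ) * ((B : ℤ) - 1))
        ≤ (a : ℤ) * (((b : ℤ) * M - 1) * ((B : ℤ) - 1)) :=
      mul_le_mul_of_nonneg_left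
        (mul_le_mul_of_nonneg_right (by linarith) (by linarith)) (by linarith)
    have p2 : (b : ℤ) * c ≤ (b : ℤ) * ((b : ℤ) * M - 1) :=
      mul_le_mul_of_nonneg_left (by linarith) (by linarith)
    have p3 : (b : ℤ) * ((b : ℤ) * M) ≤ (b : ℤ) * ((a : ℤ) * B) :=
      mul_le_mul_of_nonneg_left haB (by linarith)
    have q : (a : ℤ) * b * (((B : ℤ) - 1) * M) = (a : ℤ) * b * ((B : ℤ) ^ (j + 1) - B) := by
      rw [hMz]
    have haB2 : (a : ℤ) * 2 ≤ (a : ℤ) * B := mul_le_mul_of_nonneg_left hBz (by linarith)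
    linarith [hEz, p1, p2, p3, q, haB2]
  have hclt' : c < b * M + b := by
    rw [hMR, Nat.mul_add, mul_one] at hclt
    exact hclt
  obtain ⟨r, hr⟩ : ∃ r, c = b * M + r := ⟨c - b * M, by omega⟩
  have hrb : r < b := by omega
  have hmod : c % B = r := by
    rw [hr, hMB, show b * (B * R2) + r = B * (b * R2) + r by ring, Nat.mul_add_mod]
    exact Nat.mod_eq_of_lt (by omega)
  constructor
  · rw [hmod]; exact hr
  · rw [hmod]; exact hrb
end

section
/- Let B ≥ 2 be an integer base and k ≥ 1. If (a, b, c) is a digit-block triple with property P*_k, then, writing c_k = c mod B and M = (B^k − B)/(B − 1), the integer b·B − (B − 1)·c_k is positive and divides b·c_k·B^{k−1}, and a = b·M/B + b·c_k·B^{k−1}/(b·B − (B − 1)·c_k), i.e., a·(b·B − (B − 1)·c_k)·B = b·M·(b·B − (B − 1)·c_k) + b·c_k·B^k. -/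
/-!
Expanding `P_k` gives `b·c = a·(b·B^k − (B − 1)·c)`. With
`(B − 1)·M = B^k − B`, the residue `r = c − b·M` then satisfies `(a·(B − 1) + b)·r = b·(a·B − b·M)`;
since `b < B` and `B^{k−1} ≤ a`, the right side is positive and smaller than `B·(a·(B − 1) + b)`,
so `0 < r < B`. As `B ∣ M`, this identifies `r` with `c mod B`, and the three claims are linear
consequences of `a·(b·B − (B − 1)·r) = b·c = b·(b·M + r)`.
-/

open Finset

theorem Nat.pow_succ_sub_self_div_sub_one {B : ℕ} (hB : 2 ≤ B) (m : ℕ) :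
    (B ^ (m + 1) - B) / (B - 1) = B * ∑ i ∈ range m, B ^ i := by
  rw [pow_succ', ← Nat.mul_sub_one, Nat.mul_div_assoc _ (Nat.sub_one_dvd_pow_sub_one B m),
    Nat.geomSum_eq hB]

namespace DigitBlock

variable {B N M a b c : ℤ}

theorem residue_mul_eq (hkey : b * c = a * (b * N - (B - 1) * c)) (hM : (B - 1) * M = N - B) :
    (a * (B - 1) + b) * (c - b * M) = b * (a * B - b * M) := by
  linear_combination hkey - a * b * hM

theorem residue_pos_lt (hkey : b * c = a * (b * N - (B - 1) * c)) (hM : (B - 1) * M = N - B)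
    (ha : 0 ≤ a) (haN : N ≤ a * B) (hb : 0 < b) (hbB : b < B) (hM₀ : 0 ≤ M) :
    0 < c - b * M ∧ c - b * M < B := by
  have hrel := residue_mul_eq hkey hM
  have hcoef : 0 < a * (B - 1) + b := by nlinarith
  have hbM : b * M < a * B := by nlinarith
  constructor
  · exact pos_of_mul_pos_right (hrel ▸ mul_pos hb (by linarith)) hcoef.le
  · refine lt_of_mul_lt_mul_left ?_ hcoef.le
    rw [hrel]
    nlinarith [mul_le_mul_of_nonneg_left (show b ≤ B - 1 by omega) (mul_nonneg ha (by omega)),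
      mul_nonneg (mul_nonneg hb.le hb.le) hM₀]

theorem mul_defect_eq (hkey : b * c = a * (b * N - (B - 1) * c)) (hM : (B - 1) * M = N - B) :
    a * (b * B - (B - 1) * (c - b * M)) = b * c := by
  linear_combination -hkey + a * b * hM

theorem mul_defect_mul_eq (hkey : b * c = a * (b * N - (B - 1) * c))
    (hM : (B - 1) * M = N - B) :
    a * (b * B - (B - 1) * (c - b * M)) * B =
      b * M * (b * B - (B - 1) * (c - b * M)) + b * (c - b * M) * N := by
  linear_combination B * mul_defect_eq hkey hM + b * (c - b * M) * hM

theorem defect_dvd {m : ℕ} {G : ℤ} (hkey : b * c = a * (b * B ^ (m + 1) - (B - 1) * c))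
    (hG : G * (B - 1) = B ^ m - 1) :
    b * B - (B - 1) * (c - b * (B * G)) ∣ b * (c - b * (B * G)) * B ^ m :=
  ⟨a - b * G, by linear_combination hkey - (a * b * B + b * c - b * b * B * G) * hG⟩

end DigitBlock

open DigitBlock in
theorem stmt_17_general (B k a b c : ℕ) (hB : 2 ≤ B) (hk : 1 ≤ k)
    (ha₁ : B ^ (k - 1) ≤ a) (hb : b < B)
    (hP : (a * B + b) * c = a * (b * B ^ k + c))
    (hz : ¬(a = 0 ∧ b = 0) ∧ ¬(a = 0 ∧ c = 0) ∧ ¬(b = 0 ∧ c = 0)) :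
    0 < (b : ℤ) * B - ((B : ℤ) - 1) * (c % B : ℕ) ∧
    ((b : ℤ) * B - ((B : ℤ) - 1) * (c % B : ℕ)) ∣
      (b : ℤ) * (c % B : ℕ) * (B : ℤ) ^ (k - 1) ∧
    (a : ℤ) * ((b : ℤ) * B - ((B : ℤ) - 1) * (c % B : ℕ)) * B =
      (b : ℤ) * ((B ^ k - B) / (B - 1) : ℕ) *
        ((b : ℤ) * B - ((B : ℤ) - 1) * (c % B : ℕ)) +
      (b : ℤ) * (c % B : ℕ) * (B : ℤ) ^ k := by
  obtain ⟨m, rfl⟩ : ∃ m, k = m + 1 := ⟨k - 1, by omega⟩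
  rw [Nat.add_sub_cancel] at ha₁ ⊢
  rw [Nat.pow_succ_sub_self_div_sub_one hB]
  push_cast
  have hM₀ : (0 : ℤ) ≤ B * ∑ i ∈ range m, (B : ℤ) ^ i := by positivity
  set G : ℤ := ∑ i ∈ range m, (B : ℤ) ^ i
  have hG : G * (B - 1) = B ^ m - 1 := geom_sum_mul _ _
  have hM : ((B : ℤ) - 1) * (B * G) = B ^ (m + 1) - B := by linear_combination (B : ℤ) * hG
  have hkey : (b : ℤ) * c = a * (b * B ^ (m + 1) - (B - 1) * c) := by
    linear_combination (by exact_mod_cast hP : ((a : ℤ) * B + b) * c = a * (b * B ^ (m + 1) + c))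
  have haN : (B : ℤ) ^ (m + 1) ≤ a * B := by
    rw [pow_succ]; gcongr; exact_mod_cast ha₁
  have hb₀ : 0 < b := by
    refine Nat.pos_of_ne_zero fun hb₀ => hz.2.2 ⟨hb₀, ?_⟩
    have ha₀ : 0 < a := lt_of_lt_of_le (by positivity) ha₁
    subst hb₀
    simp only [CharP.cast_eq_zero, zero_mul, zero_sub, mul_neg, zero_eq_neg, mul_eq_zero,
      Int.natCast_eq_zero] at hkey
    omega
  obtain ⟨hr₀, hrB⟩ := residue_pos_lt hkey hM (by positivity) haN (by omega) (by omega) hM₀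
  have hr : (c : ℤ) % B = c - b * (B * G) := by
    rw [← Int.sub_mul_emod_self_left c B (b * G), mul_left_comm]
    exact Int.emod_eq_of_lt hr₀.le hrB
  rw [hr]
  refine ⟨?_, defect_dvd hkey hG, mul_defect_mul_eq hkey hM⟩
  have hbc : (0 : ℤ) < b * c := by nlinarith
  exact pos_of_mul_pos_right (mul_defect_eq hkey hM ▸ hbc) (by positivity)

/-- For a nontrivial solution of `P*_k`, writing `c_k = c % B` and
`M = (B^k − B)/(B − 1)`, the integer `b·B − (B − 1)·c_k` is positive, divides
`b·c_k·B^{k−1}`, and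
`a = b·M/B + b·c_k·B^{k−1}/(b·B − (B − 1)·c_k)`, i.e.
`a·(b·B − (B − 1)·c_k)·B = b·M·(b·B − (B − 1)·c_k) + b·c_k·B^k`. -/
theorem stmt_17 (B k a b c : ℕ) (hB : 2 ≤ B) (hk : 1 ≤ k)
    (ha₁ : B ^ (k - 1) ≤ a) (ha₂ : a < B ^ k) (hb : b < B) (hc : c < B ^ k)
    (hP : (a * B + b) * c = a * (b * B ^ k + c))
    (hz : ¬(a = 0 ∧ b = 0) ∧ ¬(a = 0 ∧ c = 0) ∧ ¬(b = 0 ∧ c = 0))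
    (hne : ¬(a = b * ((B ^ k - 1) / (B - 1)) ∧ c = b * ((B ^ k - 1) / (B - 1)))) :
    0 < (b : ℤ) * B - ((B : ℤ) - 1) * (c % B : ℕ) ∧
    ((b : ℤ) * B - ((B : ℤ) - 1) * (c % B : ℕ)) ∣
      (b : ℤ) * (c % B : ℕ) * (B : ℤ) ^ (k - 1) ∧
    (a : ℤ) * ((b : ℤ) * B - ((B : ℤ) - 1) * (c % B : ℕ)) * B =
      (b : ℤ) * ((B ^ k - B) / (B - 1) : ℕ) *
        ((b : ℤ) * B - ((B : ℤ) - 1) * (c % B : ℕ)) +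
      (b : ℤ) * (c % B : ℕ) * (B : ℤ) ^ k :=
  stmt_17_general B k a b c hB hk ha₁ hb hP hz
end

section
/- Let B ≥ 2 be an integer base and k ≥ 1. If (a, b, c) is a digit-block triple with property P*_k, then gcd(c mod B, B) > 1 (the last base-B digit of c shares a factor greater than 1 with B); moreover, writing a_k = a mod B for the last base-B digit of a, if a_k ≠ b then gcd(|a_k − b|, B) > 1. -/
/-!
Property `P_k` is equivalent to `c * X = a * b * B ^ k` with `X = a * (B - 1) + b`.
If the last digit of `c` were prime to `B`, then `B ^ k ∣ X`, and since `0 < X < B ^ (k + 1)`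
we get `X = B ^ k * t` with `0 < t < B`; reducing modulo `B - 1` forces `t = b` and
`a = c = b * (B ^ k - 1) / (B - 1)`, the excluded repdigit.
For the second claim, `a % B - b ≡ -X [ZMOD B]`, so if it were prime to `B` then `B ^ k ∣ c`,
whence `c = 0` and then `b = 0`.
-/

theorem repunit_mul_sub_one_add_one {B : ℕ} (hB : 0 < B) (k : ℕ) :
    (B ^ k - 1) / (B - 1) * (B - 1) + 1 = B ^ k := by
  have hdvd : B - 1 ∣ B ^ k - 1 := by
    simpa only [one_pow] using Nat.sub_dvd_pow_sub_pow B 1 k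
  rw [Nat.div_mul_cancel hdvd, Nat.sub_add_cancel (Nat.one_le_pow k B hB)]

theorem mul_sub_one_add_eq_of_mul_eq {B k a b c : ℕ} (hB : 1 ≤ B)
    (hP : (a * B + b) * c = a * (b * B ^ k + c)) :
    c * (a * (B - 1) + b) = a * b * B ^ k := by
  zify [hB] at hP ⊢
  linear_combination hP

theorem Int.gcd_emod_sub_eq_gcd_mul_sub_one_add {B : ℕ} (hB : 1 ≤ B) (a b : ℕ) :
    Int.gcd ((a % B : ℤ) - b) B = Nat.gcd (a * (B - 1) + b) B := by
  have : (a % B : ℤ) - b = -↑(a * (B - 1) + b) + (a - a / B) * B := by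
    push_cast [hB, Int.emod_def]
    ring
  rw [this, Int.gcd_add_mul_right_left, Int.neg_gcd, Int.gcd_natCast_natCast]

/-- With `B ^ k = R * (B - 1) + 1`, the equation reads `(a - R * t) * (B - 1) = t - b`, and
`2 - B ≤ t - b ≤ B - 1` leaves only `a = R * t` or `a = R * (B - 1) + 1 = B ^ k`. -/
theorem eq_and_eq_mul_of_mul_sub_one_add_eq_pow_mul {B k a b t R : ℕ}
    (hR : R * (B - 1) + 1 = B ^ k) (ha : a < B ^ k) (hb : b < B) (ht₀ : 0 < t) (ht : t < B)
    (h : a * (B - 1) + b = B ^ k * t) :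
    b = t ∧ a = b * R := by
  zify [(by omega : 1 ≤ B)] at hR h ha hb ht ht₀ ⊢
  have hd : ((a : ℤ) - R * t) * (B - 1) = t - b := by linear_combination h - t * hR
  have hd0 : (a : ℤ) - R * t = 0 := by
    have : 0 ≤ (a : ℤ) - R * t := by nlinarith
    have : (a : ℤ) - R * t < 1 := by nlinarith
    omega
  have hbt : (b : ℤ) = t := by linear_combination hd - (B - 1 : ℤ) * hd0
  exact ⟨hbt, by linear_combination hd0 - R * hbt⟩

theorem one_lt_gcd_emod_of_mul_eq {B k a b c : ℕ} (hB : 2 ≤ B) (ha₀ : 0 < a) (ha : a < B ^ k)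
    (hb : b < B) (hkey : c * (a * (B - 1) + b) = a * b * B ^ k)
    (hne : ¬(a = b * ((B ^ k - 1) / (B - 1)) ∧ c = b * ((B ^ k - 1) / (B - 1)))) :
    1 < Nat.gcd (c % B) B := by
  rw [← Nat.gcd_rec]
  by_contra! hgcd
  have hcop : Nat.Coprime (B ^ k) c :=
    Nat.Coprime.pow_left k (by have := Nat.gcd_pos_of_pos_left c (by omega : 0 < B); omega)
  obtain ⟨t, ht⟩ : B ^ k ∣ a * (B - 1) + b :=
    hcop.dvd_of_dvd_mul_left ⟨a * b, by rw [hkey, mul_comm]⟩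
  have hBk : 0 < B ^ k := by positivity
  have ht₀ : 0 < t :=
    Nat.pos_of_mul_pos_left (ht ▸ Nat.add_pos_left (Nat.mul_pos ha₀ (by omega)) b)
  have htB : t < B := by
    have hX : a * (B - 1) + b < B ^ k * B := by
      zify [(by omega : 1 ≤ B)] at ha hb ⊢
      nlinarith
    exact Nat.lt_of_mul_lt_mul_left (ht ▸ hX)
  obtain ⟨rfl, ha_eq⟩ := eq_and_eq_mul_of_mul_sub_one_add_eq_pow_mul
    (repunit_mul_sub_one_add_one (by omega) k) ha hb ht₀ htB ht
  have hca : c = a := by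
    rw [ht] at hkey
    exact Nat.eq_of_mul_eq_mul_right (Nat.mul_pos hBk ht₀) (by rw [hkey]; ring)
  exact hne ⟨ha_eq, hca ▸ ha_eq⟩

theorem one_lt_gcd_mul_sub_one_add_of_mul_eq {B k a b c : ℕ} (hB : 0 < B) (ha₀ : 0 < a)
    (hc : c < B ^ k) (hkey : c * (a * (B - 1) + b) = a * b * B ^ k) (hbc : ¬(b = 0 ∧ c = 0)) :
    1 < Nat.gcd (a * (B - 1) + b) B := by
  by_contra! hgcd
  have hcop : Nat.Coprime (B ^ k) (a * (B - 1) + b) := Nat.Coprime.pow_left k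
    (Nat.coprime_comm.mp (by have := Nat.gcd_pos_of_pos_right (a * (B - 1) + b) hB; omega))
  have hc0 : c = 0 := Nat.eq_zero_of_dvd_of_lt (hcop.dvd_of_dvd_mul_right ⟨a * b, by
    rw [hkey, mul_comm]⟩) hc
  have hb0 : b = 0 := by
    subst hc0
    simpa [ha₀.ne', hB.ne'] using hkey
  exact hbc ⟨hb0, hc0⟩

theorem stmt_18_general (B k a b c : ℕ) (hB : 2 ≤ B)
    (ha₁ : B ^ (k - 1) ≤ a) (ha₂ : a < B ^ k) (hb : b < B) (hc : c < B ^ k)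
    (hP : (a * B + b) * c = a * (b * B ^ k + c))
    (hz : ¬(a = 0 ∧ b = 0) ∧ ¬(a = 0 ∧ c = 0) ∧ ¬(b = 0 ∧ c = 0))
    (hne : ¬(a = b * ((B ^ k - 1) / (B - 1)) ∧ c = b * ((B ^ k - 1) / (B - 1)))) :
    1 < Nat.gcd (c % B) B ∧
    (a % B ≠ b → 1 < Int.gcd ((a % B : ℤ) - (b : ℤ)) (B : ℤ)) := by
  have ha₀ : 0 < a := (Nat.one_le_pow _ _ (by omega)).trans ha₁
  have hkey := mul_sub_one_add_eq_of_mul_eq (by omega) hP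
  refine ⟨one_lt_gcd_emod_of_mul_eq hB ha₀ ha₂ hb hkey hne, fun _ => ?_⟩
  rw [Int.gcd_emod_sub_eq_gcd_mul_sub_one_add (by omega)]
  exact one_lt_gcd_mul_sub_one_add_of_mul_eq (by omega) ha₀ hc hkey hz.2.2

/-- For a nontrivial solution of `P*_k`, the last digit of `c` shares a factor
with `B`, and if the last digit `a_k = a % B` of `a` differs from `b`, then
`|a_k − b|` also shares a factor with `B`. -/
theorem stmt_18 (B k a b c : ℕ) (hB : 2 ≤ B) (hk : 1 ≤ k)
    (ha₁ : B ^ (k - 1) ≤ a) (ha₂ : a < B ^ k) (hb : b < B) (hc : c < B ^ k)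
    (hP : (a * B + b) * c = a * (b * B ^ k + c))
    (hz : ¬(a = 0 ∧ b = 0) ∧ ¬(a = 0 ∧ c = 0) ∧ ¬(b = 0 ∧ c = 0))
    (hne : ¬(a = b * ((B ^ k - 1) / (B - 1)) ∧ c = b * ((B ^ k - 1) / (B - 1)))) :
    1 < Nat.gcd (c % B) B ∧
    (a % B ≠ b → 1 < Int.gcd ((a % B : ℤ) - (b : ℤ)) (B : ℤ)) :=
  stmt_18_general B k a b c hB ha₁ ha₂ hb hc hP hz hne
end

section
/- Let B ≥ 4 be an even integer base and k ≥ 1. Then the triple (a, b, c) = (B^k/2 − 1, B − 1, B^k − 2) is a digit-block triple with property P*_k; that is, B^{k−1} ≤ a < B^k, 0 ≤ b < B, 0 ≤ c < B^k, (a·B + b)·c = a·(b·B^k + c), no two of a, b, c are zero, and not a = c = b·(B^k − 1)/(B − 1). -/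
/-- For an even base `B ≥ 4`, the triple `(B^k/2 − 1, B − 1, B^k − 2)` is a
nontrivial solution of `P*_k` (indeed the largest one). -/
theorem stmt_19 (B k : ℕ) (hB : 4 ≤ B) (hBeven : 2 ∣ B) (hk : 1 ≤ k) :
    B ^ (k - 1) ≤ B ^ k / 2 - 1 ∧ B ^ k / 2 - 1 < B ^ k ∧
    B - 1 < B ∧ B ^ k - 2 < B ^ k ∧
    ((B ^ k / 2 - 1) * B + (B - 1)) * (B ^ k - 2) =
      (B ^ k / 2 - 1) * ((B - 1) * B ^ k + (B ^ k - 2)) ∧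
    (¬(B ^ k / 2 - 1 = 0 ∧ B - 1 = 0) ∧
     ¬(B ^ k / 2 - 1 = 0 ∧ B ^ k - 2 = 0) ∧
     ¬(B - 1 = 0 ∧ B ^ k - 2 = 0)) ∧
    ¬(B ^ k / 2 - 1 = (B - 1) * ((B ^ k - 1) / (B - 1)) ∧
      B ^ k - 2 = (B - 1) * ((B ^ k - 1) / (B - 1))) := by
  obtain ⟨m, rfl⟩ := hBeven
  obtain ⟨j, rfl⟩ : ∃ j, k = j + 1 := ⟨k - 1, by omega⟩
  have hm : 2 ≤ m := by omega
  have hN : 1 ≤ (2 * m) ^ j := Nat.one_le_pow _ _ (by omega)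
  have hpow : (2 * m) ^ (j + 1) = 2 * (m * (2 * m) ^ j) := by ring
  have hdiv : (2 * m) ^ (j + 1) / 2 = m * (2 * m) ^ j := by
    rw [hpow]; exact Nat.mul_div_cancel_left _ (by norm_num)
  have h2 : 2 * (2 * m) ^ j ≤ m * (2 * m) ^ j := Nat.mul_le_mul_right _ hm
  have hM : 2 ≤ m * (2 * m) ^ j := by omega
  simp only [Nat.add_sub_cancel]
  rw [hdiv, hpow]
  refine ⟨by omega, by omega, by omega, by omega, ?_, ⟨by omega, by omega, by omega⟩, ?_⟩
  · zify [show 1 ≤ m * (2 * m) ^ j by omega, show 2 ≤ 2 * (m * (2 * m) ^ j) by omega,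
      show 1 ≤ 2 * m by omega]
    ring
  · rintro ⟨-, hc⟩
    have hdvd : (2 * m - 1) ∣ (2 * m) ^ (j + 1) - 1 := by
      have := Nat.sub_dvd_pow_sub_pow (2 * m) 1 (j + 1)
      simpa using this
    have heq : (2 * m - 1) * (((2 * m) ^ (j + 1) - 1) / (2 * m - 1)) =
        (2 * m) ^ (j + 1) - 1 := Nat.mul_div_cancel' hdvd
    rw [hpow] at heq
    omega
end
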